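/- arXiv:1007.4294 — 7 statements merged into one kernel-verified Lean document; each statement's English description precedes it below -/
import Mathlib

section
/- Let U be an optimal prefix-free machine. Then n − H_U(n) tends to infinity as n → ∞, where n ∈ ℕ is identified with a finite binary string via the bijection sending a string s to the natural number whose binary expansion is the concatenation 1s, minus 1. -/
open scoped ENNReal

/-- A set of binary strings is prefix-free: no element is a proper prefix of another. -/
def PrefixFreeSet (S : Set (List Bool)) : Prop :=
  ∀ p ∈ S, ∀ q ∈ S, p <+: q → p = q

/-- A prefix-free machine: a partial recursive function on binary strings
whose domain is a prefix-free set. -/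
def PFMachine (C : List Bool →. List Bool) : Prop :=
  Partrec C ∧ PrefixFreeSet C.Dom

/-- `Hm C s` is the length of a shortest program `p` with `C p = s` (`∞` if none). -/
noncomputable def Hm (C : List Bool →. List Bool) (s : List Bool) : ℕ∞ :=
  sInf ((fun p : List Bool => (p.length : ℕ∞)) '' {p | s ∈ C p})

/-- An optimal prefix-free machine: for every prefix-free machine `C` there is `d ∈ ℕ`
such that every `p ∈ dom C` has a `q` with `U q = C p` and `|q| ≤ |p| + d`. -/
def OptimalPFM (U : List Bool →. List Bool) : Prop :=
  PFMachine U ∧ ∀ C : List Bool →. List Bool, PFMachine C →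
    ∃ d : ℕ, ∀ p s, s ∈ C p → ∃ q : List Bool, s ∈ U q ∧ q.length ≤ p.length + d

/-- The binary string identified with `n : ℕ` via `φ(s) = (the dyadic integer 1s) − 1`. -/
def strOfNat (n : ℕ) : List Bool := ((n + 1).bits.dropLast).reverse

/-!
Encoding `s` as `1^|s| 0 s` is a prefix-free code of length `2|s| + 1`, decoded by a
primitive recursive prefix-free machine. Optimality of `U` therefore gives
`H_U(s) ≤ 2|s| + O(1)`. The string identified with `n` has length `⌊log₂ (n + 1)⌋`, so
`H_U(n) ≤ 2 log₂ n + O(1)`, which is eventually smaller than `n - M` for every `M`.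
-/

open Filter

namespace SelfDelimiting

def encode (s : List Bool) : List Bool := List.replicate s.length true ++ false :: s

-- The length test makes the domain exactly the set of codewords, hence prefix-free.
def decode (p : List Bool) : Option (List Bool) :=
  if p.length = 2 * p.idxOf false + 1 then some (p.drop (p.idxOf false + 1)) else none

def machine : List Bool →. List Bool := fun p => (decode p : Part (List Bool))

theorem idxOf_false_encode (s : List Bool) : (encode s).idxOf false = s.length := by
  rw [encode, List.idxOf_append_of_notMem (by simp)]
  simp

theorem length_encode (s : List Bool) : (encode s).length = 2 * s.length + 1 := by
  simp [encode]
  ring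

theorem decode_encode (s : List Bool) : decode (encode s) = some s := by
  rw [decode, idxOf_false_encode, length_encode, if_pos rfl, encode]
  simp [List.drop_append]

theorem mem_machine_encode (s : List Bool) : s ∈ machine (encode s) := by
  simp [machine, decode_encode]

theorem primrec_decode : Primrec decode := by
  have hidx : Primrec fun p : List Bool => p.idxOf false :=
    Primrec.list_idxOf.comp (.const false) .id
  exact Primrec.ite
    (Primrec.eq.comp Primrec.list_length (Primrec.succ.comp (Primrec.nat_mul.comp (.const 2) hidx)))
    (Primrec.option_some.comp (Primrec.list_drop.comp (Primrec.succ.comp hidx) .id))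
    (.const none)

theorem length_eq_of_mem_dom {p : List Bool} (hp : p ∈ machine.Dom) :
    p.length = 2 * p.idxOf false + 1 := by
  by_contra h
  simp [machine, decode, h] at hp

theorem prefixFreeSet_dom : PrefixFreeSet machine.Dom := by
  rintro p hp _ hq ⟨r, rfl⟩
  have hfalse : false ∈ p := by
    rw [← List.idxOf_lt_length_iff]
    have := length_eq_of_mem_dom hp
    omega
  have hpr := length_eq_of_mem_dom hq
  rw [List.idxOf_append_of_mem hfalse, List.length_append, length_eq_of_mem_dom hp] at hpr
  simp [List.length_eq_zero_iff.mp (by omega : r.length = 0)]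

theorem pfMachine : PFMachine machine :=
  ⟨Computable.ofOption primrec_decode.to_comp, prefixFreeSet_dom⟩

end SelfDelimiting

theorem Hm_le_length {C : List Bool →. List Bool} {p s : List Bool} (h : s ∈ C p) :
    Hm C s ≤ p.length :=
  sInf_le ⟨p, h, rfl⟩

theorem OptimalPFM.exists_Hm_le_add {U C : List Bool →. List Bool} (hU : OptimalPFM U)
    (hC : PFMachine C) : ∃ d : ℕ, ∀ s, Hm U s ≤ Hm C s + d := by
  obtain ⟨d, hd⟩ := hU.2 C hC
  refine ⟨d, fun s => ?_⟩
  conv_rhs => rw [Hm, ENat.sInf_add]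
  refine le_iInf₂ ?_
  rintro _ ⟨p, hp, rfl⟩
  obtain ⟨q, hq, hqp⟩ := hd p s hp
  exact (Hm_le_length hq).trans (by dsimp only; exact_mod_cast hqp)

theorem OptimalPFM.exists_Hm_le_two_mul_length_add {U : List Bool →. List Bool}
    (hU : OptimalPFM U) : ∃ d : ℕ, ∀ s, Hm U s ≤ (2 * s.length + d : ℕ) := by
  obtain ⟨d, hd⟩ := hU.exists_Hm_le_add SelfDelimiting.pfMachine
  refine ⟨d + 1, fun s => (hd s).trans ?_⟩
  have := Hm_le_length (SelfDelimiting.mem_machine_encode s)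
  rw [SelfDelimiting.length_encode] at this
  calc Hm _ s + d ≤ ((2 * s.length + 1 : ℕ) : ℕ∞) + d := by gcongr
    _ = (2 * s.length + (d + 1) : ℕ) := by push_cast; ring

theorem length_strOfNat (n : ℕ) : (strOfNat n).length = Nat.log 2 (n + 1) := by
  have := Nat.length_digits 2 (n + 1) one_lt_two n.succ_ne_zero
  rw [Nat.digits_two_eq_bits, List.length_map] at this
  rw [strOfNat, List.length_reverse, List.length_dropLast, this, Nat.add_sub_cancel]

theorem eventually_two_mul_log_add_le (c : ℕ) : ∀ᶠ n in atTop, 2 * Nat.log 2 n + c ≤ n := by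
  filter_upwards [eventually_ge_atTop (2 ^ (c + 4))] with n hn
  obtain ⟨j, hj⟩ := Nat.exists_eq_add_of_le (Nat.le_log_of_pow_le one_lt_two hn)
  have hpow : 2 ^ (c + j + 4) ≤ n := by
    rw [add_right_comm, ← hj]
    exact Nat.pow_log_le_self 2 (ne_of_gt (lt_of_lt_of_le (by positivity) hn))
  have := Nat.lt_two_pow_self (n := c + j)
  rw [pow_add] at hpow
  omega

/-- `n − H_U(n)` tends to infinity as `n → ∞`: for every `M` there is `n₀` such that
for all `n ≥ n₀` one has `H_U(n) + M ≤ n`, i.e. `n − H_U(n) ≥ M`. -/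
theorem n_sub_H_tendsto_atTop (U : List Bool →. List Bool) (hU : OptimalPFM U) :
    ∀ M : ℕ, ∃ n₀ : ℕ, ∀ n : ℕ, n₀ ≤ n →
      Hm U (strOfNat n) + (M : ℕ∞) ≤ (n : ℕ∞) := by
  intro M
  obtain ⟨d, hd⟩ := hU.exists_Hm_le_two_mul_length_add
  obtain ⟨n₀, hn₀⟩ := eventually_atTop.mp (eventually_two_mul_log_add_le (d + M + 1))
  refine ⟨n₀, fun n hn => ?_⟩
  have hlog := hn₀ (n + 1) (by omega)
  calc Hm U (strOfNat n) + M ≤ (2 * Nat.log 2 (n + 1) + d : ℕ) + M := by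
        rw [← length_strOfNat]; gcongr; exact hd _
    _ ≤ n := by norm_cast; omega
end

section
/- For every prefix-free machine C there exists a prefix-free machine D such that: (i) H_D(s) = H_C(s) for every finite binary string s (equality in ℕ ∪ {∞}); (ii) D⁻¹(s) = {p : D(p) = s} is a finite set for every s; and (iii) there exists a partial recursive function f : {0,1}* →. ℕ⁺ such that the domain of f equals {s : D⁻¹(s) ≠ ∅} and #D⁻¹(s) ≤ f(s) for every s in the domain of f. -/
open scoped ENNReal

/-!
Enumerate the graph of `C` by dovetailing and keep a pair `(p, s)` only when `p` is strictly
shorter than every program for `s` enumerated before it. The resulting machine `D` is a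
restriction of `C`, so its domain stays prefix-free, and the first enumerated program of minimal
length for `s` is kept, so `H_D = H_C`. The programs kept for `s` have pairwise distinct lengths,
none longer than the first program `p₀` found for `s`; hence `#D⁻¹(s) ≤ |p₀| + 1`, and
`f(s) = |p₀| + 1` is computed by waiting for `p₀`.
-/

theorem Nat.rfindOpt_spec_min {α : Type*} {f : ℕ → Option α} {a : α}
    (h : a ∈ Nat.rfindOpt f) : ∃ n, f n = some a ∧ ∀ m < n, f m = none := by
  obtain ⟨n, hn, hfn⟩ := Part.mem_bind_iff.mp h
  obtain ⟨-, hmin⟩ := Nat.mem_rfind.mp hn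
  refine ⟨n, Part.mem_coe.mp hfn, fun m hm => ?_⟩
  simpa using hmin hm

section Enumeration

variable {α β : Type*}

def EnumeratesGraph (e : ℕ → Option (α × β)) (C : α →. β) : Prop :=
  ∀ a b, b ∈ C a ↔ ∃ k, e k = some (a, b)

open Nat.Partrec Encodable in
/-- Dovetailing: stage `k = ⟪n, j⟫` reports the output of the program with code `n` if it halts
within `j` steps. -/
theorem Partrec.exists_primrec_enumeratesGraph [Primcodable α] [Primcodable β] {C : α →. β}
    (hC : Partrec C) : ∃ e : ℕ → Option (α × β), Primrec e ∧ EnumeratesGraph e C := by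
  obtain ⟨c, hc⟩ := Code.exists_code.mp hC
  let e : ℕ → Option (α × β) := fun k =>
    (decode k.unpair.1).bind fun a =>
      ((Code.evaln k.unpair.2 c k.unpair.1).bind decode).map (a, ·)
  refine ⟨e, ?_, fun a b => ⟨fun h => ?_, fun ⟨k, hk⟩ => ?_⟩⟩
  · open Primrec in
    have hevaln : Primrec fun k : ℕ => Code.evaln k.unpair.2 c k.unpair.1 :=
      Code.primrec_evaln.comp <| pair (pair (snd.comp unpair) (const c)) (fst.comp unpair)
    exact option_bind (Primrec.decode.comp (fst.comp unpair)) <|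
      option_map ((option_bind hevaln (Primrec.decode.comp snd).to₂).comp fst)
        (pair (snd.comp fst) snd).to₂
  · obtain ⟨j, hj⟩ := Code.evaln_complete.mp
      (show encode b ∈ Code.eval c (encode a) by simp [hc, Part.mem_map _ h])
    refine ⟨Nat.pair (encode a) j, ?_⟩
    simp [e, Option.mem_def.mp hj]
  · simp only [e, Option.bind_eq_some_iff, Option.map_eq_some_iff, Prod.mk.injEq] at hk
    obtain ⟨a, ha, b, ⟨v, hv, hb⟩, rfl, rfl⟩ := hk
    have : v ∈ (C a).map encode := by simpa [hc, ha] using Code.evaln_sound hv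
    obtain ⟨b', hb', rfl⟩ := (Part.mem_map_iff _).mp this
    exact Option.some_inj.mp ((encodek b').symm.trans hb) ▸ hb'

end Enumeration

section Prune

variable {α β : Type*} (e : ℕ → Option (α × β)) (w : α → ℕ)

def PruneAccepts (k : ℕ) (x : α × β) : Prop :=
  ∀ j < k, ∀ y, e j = some y → y.2 = x.2 → w x.1 < w y.1

open Classical in
noncomputable def pruneStep (a : α) (k : ℕ) : Option β :=
  (e k).bind fun x => if x.1 = a ∧ PruneAccepts e w k x then some x.2 else none

noncomputable def prune : α →. β := fun a => Nat.rfindOpt (pruneStep e w a)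

open Classical in
noncomputable def pruneBoundStep (b : β) (k : ℕ) : Option ℕ :=
  (e k).bind fun x => if x.2 = b then some (w x.1 + 1) else none

noncomputable def pruneBound : β →. ℕ := fun b => Nat.rfindOpt (pruneBoundStep e w b)

variable {e w}

theorem pruneStep_eq_some {a : α} {b : β} {k : ℕ} :
    pruneStep e w a k = some b ↔ e k = some (a, b) ∧ PruneAccepts e w k (a, b) := by
  unfold pruneStep
  rcases e k with _ | ⟨a', b'⟩
  · simp
  · simp only [Option.bind_some, Option.ite_none_right_eq_some, Option.some_inj, Prod.mk.injEq]
    constructor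
    · rintro ⟨⟨rfl, h⟩, rfl⟩
      exact ⟨⟨rfl, rfl⟩, h⟩
    · rintro ⟨⟨rfl, rfl⟩, h⟩
      exact ⟨⟨rfl, h⟩, rfl⟩

theorem pruneBoundStep_eq_some {b : β} {k n : ℕ} :
    pruneBoundStep e w b k = some n ↔ ∃ a, e k = some (a, b) ∧ n = w a + 1 := by
  unfold pruneBoundStep
  rcases e k with _ | ⟨a', b'⟩ <;> simp [eq_comm]

theorem exists_pruneAccepts_of_mem_prune {a : α} {b : β} (h : b ∈ prune e w a) :
    ∃ k, e k = some (a, b) ∧ PruneAccepts e w k (a, b) :=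
  let ⟨k, hk⟩ := Nat.rfindOpt_spec h
  ⟨k, pruneStep_eq_some.mp hk⟩

theorem mem_prune_of_pruneAccepts {C : α →. β} (he : EnumeratesGraph e C) {a : α} {b : β} {k : ℕ}
    (hk : e k = some (a, b)) (hacc : PruneAccepts e w k (a, b)) : b ∈ prune e w a := by
  have hdom : (prune e w a).Dom := Nat.rfindOpt_dom.mpr ⟨k, b, pruneStep_eq_some.mpr ⟨hk, hacc⟩⟩
  obtain ⟨k', hk', -⟩ := exists_pruneAccepts_of_mem_prune (Part.get_mem hdom)
  have hget : (prune e w a).get hdom = b :=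
    Part.mem_unique ((he _ _).mpr ⟨k', hk'⟩) ((he a b).mpr ⟨k, hk⟩)
  exact hget ▸ Part.get_mem hdom

theorem mem_of_mem_prune {C : α →. β} (he : EnumeratesGraph e C) {a : α} {b : β}
    (h : b ∈ prune e w a) : b ∈ C a :=
  let ⟨k, hk, _⟩ := exists_pruneAccepts_of_mem_prune h
  (he a b).mpr ⟨k, hk⟩

theorem injOn_prune_fiber (b : β) : Set.InjOn w {a | b ∈ prune e w a} := by
  intro a₁ h₁ a₂ h₂ hw
  obtain ⟨k₁, hk₁, hacc₁⟩ := exists_pruneAccepts_of_mem_prune h₁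
  obtain ⟨k₂, hk₂, hacc₂⟩ := exists_pruneAccepts_of_mem_prune h₂
  rcases lt_trichotomy k₁ k₂ with hlt | rfl | hlt
  · exact ((hacc₂ k₁ hlt _ hk₁ rfl).ne' hw).elim
  · simpa using hk₁.symm.trans hk₂
  · exact ((hacc₁ k₂ hlt _ hk₂ rfl).ne hw).elim

theorem mapsTo_prune_fiber_Iio {b : β} {n : ℕ} (hn : n ∈ pruneBound e w b) :
    Set.MapsTo w {a | b ∈ prune e w a} (Set.Iio n) := by
  intro a (ha : b ∈ prune e w a)
  obtain ⟨k₀, hk₀, hfirst⟩ := Nat.rfindOpt_spec_min hn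
  obtain ⟨a₀, he₀, rfl⟩ := pruneBoundStep_eq_some.mp hk₀
  obtain ⟨k, hk, hacc⟩ := exists_pruneAccepts_of_mem_prune ha
  rcases lt_trichotomy k k₀ with hlt | rfl | hlt
  · exact absurd ((pruneBoundStep_eq_some (w := w)).mpr ⟨a, hk, rfl⟩) (by simp [hfirst k hlt])
  · cases hk.symm.trans he₀
    exact Nat.lt_succ_self _
  · exact (hacc k₀ hlt _ he₀ rfl).trans (Nat.lt_succ_self _)

theorem pos_of_mem_pruneBound {b : β} {n : ℕ} (hn : n ∈ pruneBound e w b) : 0 < n := by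
  obtain ⟨k, hk⟩ := Nat.rfindOpt_spec hn
  obtain ⟨a, -, rfl⟩ := pruneBoundStep_eq_some.mp hk
  exact Nat.succ_pos _

theorem pruneBound_dom_iff {C : α →. β} (he : EnumeratesGraph e C) {b : β} :
    (pruneBound e w b).Dom ↔ ∃ a, b ∈ C a := by
  simp only [pruneBound, Nat.rfindOpt_dom, Option.mem_def, pruneBoundStep_eq_some]
  refine ⟨fun ⟨k, _, a, hk, _⟩ => ⟨a, (he a b).mpr ⟨k, hk⟩⟩, fun ⟨a, hb⟩ => ?_⟩
  obtain ⟨k, hk⟩ := (he a b).mp hb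
  exact ⟨k, _, a, hk, rfl⟩

/-- Among the enumerated programs of least weight for `b`, the first one is accepted. -/
theorem exists_mem_prune_le {C : α →. β} (he : EnumeratesGraph e C) {a : α} {b : β}
    (h : b ∈ C a) : ∃ a', b ∈ prune e w a' ∧ w a' ≤ w a := by
  classical
  have hm : ∃ m, ∃ a, b ∈ C a ∧ w a = m := ⟨_, a, h, rfl⟩
  have hk : ∃ k, ∃ a', e k = some (a', b) ∧ w a' = Nat.find hm := by
    obtain ⟨a₁, h₁, hw₁⟩ := Nat.find_spec hm
    obtain ⟨k, hk⟩ := (he a₁ b).mp h₁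
    exact ⟨k, a₁, hk, hw₁⟩
  obtain ⟨a₁, hk₁, hw₁⟩ := Nat.find_spec hk
  refine ⟨a₁, mem_prune_of_pruneAccepts he hk₁ ?_, hw₁ ▸ Nat.find_min' hm ⟨a, h, rfl⟩⟩
  rintro j hj ⟨a₂, b₂⟩ hj₂ (rfl : b₂ = b)
  have hle : w a₁ ≤ w a₂ := hw₁ ▸ Nat.find_min' hm ⟨a₂, (he a₂ b₂).mpr ⟨j, hj₂⟩, rfl⟩
  refine hle.lt_of_ne fun hw => Nat.find_min hk hj ⟨a₂, hj₂, ?_⟩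
  exact hw ▸ hw₁

theorem finite_prune_fiber {C : α →. β} (he : EnumeratesGraph e C) (b : β) :
    {a | b ∈ prune e w a}.Finite := by
  by_cases h : ∃ a, b ∈ prune e w a
  · obtain ⟨a, ha⟩ := h
    obtain ⟨n, hn⟩ := Part.dom_iff_mem.mp
      ((pruneBound_dom_iff he).mpr ⟨a, mem_of_mem_prune he ha⟩)
    exact .of_injOn (mapsTo_prune_fiber_Iio hn) (injOn_prune_fiber b) (Set.finite_Iio n)
  · exact Set.finite_empty.subset fun a ha => h ⟨a, ha⟩

theorem ncard_prune_fiber_le {b : β} {n : ℕ} (hn : n ∈ pruneBound e w b) :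
    {a | b ∈ prune e w a}.ncard ≤ n :=
  (Set.ncard_le_ncard_of_injOn w (mapsTo_prune_fiber_Iio hn) (injOn_prune_fiber b)).trans
    (Set.ncard_Iio_nat n).le

theorem pruneBound_dom {C : α →. β} (he : EnumeratesGraph e C) :
    (pruneBound e w).Dom = {b | ∃ a, b ∈ prune e w a} := by
  ext b
  refine (pruneBound_dom_iff he).trans ⟨fun ⟨a, h⟩ => ?_, fun ⟨a, h⟩ => ⟨a, mem_of_mem_prune he h⟩⟩
  obtain ⟨a', h', -⟩ := exists_mem_prune_le (w := w) he h
  exact ⟨a', h'⟩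

end Prune

section Computability

variable {α β : Type*} [Primcodable α] [Primcodable β] {e : ℕ → Option (α × β)} {w : α → ℕ}

open Primrec

theorem primrecRel_pruneAccepts (he : Primrec e) (hw : Primrec w) :
    PrimrecRel (PruneAccepts e w) := by
  have hbeats : PrimrecRel fun (y x : α × β) => y.2 = x.2 → w x.1 < w y.1 :=
    (PrimrecPred.or (PrimrecPred.not (Primrec.eq.comp (snd.comp fst) (snd.comp snd)))
      (nat_lt.comp (hw.comp (fst.comp snd)) (hw.comp (fst.comp fst)))).of_eq
      fun _ => imp_iff_not_or.symm
  have hearlier : Primrec fun k => (List.range k).filterMap e :=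
    listFilterMap list_range (he.comp snd).to₂
  refine (hbeats.forall_mem_list.comp₂ (hearlier.comp₂ Primrec₂.left) Primrec₂.right).of_eq
    fun k x => ?_
  simp only [PruneAccepts, List.mem_filterMap, List.mem_range]
  exact ⟨fun h j hj y hy => h y ⟨j, hj, hy⟩, fun h y ⟨j, hj, hy⟩ => h j hj y hy⟩

open Classical in
theorem Partrec.prune (he : Primrec e) (hw : Primrec w) : Partrec (prune e w) := by
  have hstep : Primrec₂ (pruneStep e w) :=
    option_bind (he.comp snd) (ite ((Primrec.eq.comp (fst.comp snd) (fst.comp fst)).and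
      ((primrecRel_pruneAccepts he hw).comp (snd.comp fst) snd))
      (option_some.comp (snd.comp snd)) (const Option.none)).to₂
  exact Partrec.rfindOpt hstep.to_comp

open Classical in
theorem Partrec.pruneBound (he : Primrec e) (hw : Primrec w) : Partrec (pruneBound e w) := by
  have hstep : Primrec₂ (pruneBoundStep e w) :=
    option_bind (he.comp snd) (ite (Primrec.eq.comp (snd.comp snd) (fst.comp fst))
      (option_some.comp (succ.comp (hw.comp (fst.comp snd)))) (const Option.none)).to₂
  exact Partrec.rfindOpt hstep.to_comp

end Computability

theorem PrefixFreeSet.mono {S T : Set (List Bool)} (hST : S ⊆ T) (hT : PrefixFreeSet T) :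
    PrefixFreeSet S :=
  fun p hp q hq => hT p (hST hp) q (hST hq)

theorem Hm_eq_of_forall_exists_length_le {C D : List Bool →. List Bool}
    (hDC : ∀ p s, s ∈ D p → s ∈ C p) (hCD : ∀ p s, s ∈ C p → ∃ q, s ∈ D q ∧ q.length ≤ p.length)
    (s : List Bool) : Hm D s = Hm C s := by
  refine le_antisymm (le_sInf ?_) (sInf_le_sInf (Set.image_mono fun p => hDC p s))
  rintro _ ⟨p, hp, rfl⟩
  obtain ⟨q, hq, hle⟩ := hCD p s hp
  calc Hm D s ≤ q.length := sInf_le ⟨q, hq, rfl⟩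
    _ ≤ p.length := Nat.cast_le.mpr hle

/-- For every prefix-free machine `C` there is a prefix-free machine `D` with
(i) `H_D = H_C`, (ii) every `D⁻¹(s)` finite, and (iii) a partial recursive
`f : {0,1}* →. ℕ⁺` with domain `{s | D⁻¹(s) ≠ ∅}` bounding `#D⁻¹(s)` on its domain. -/
theorem exists_machine_finite_fibers (C : List Bool →. List Bool) (hC : PFMachine C) :
    ∃ D : List Bool →. List Bool, PFMachine D ∧
      (∀ s, Hm D s = Hm C s) ∧
      (∀ s, {p : List Bool | s ∈ D p}.Finite) ∧
      ∃ f : List Bool →. ℕ, Partrec f ∧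
        (∀ s, ∀ k ∈ f s, 0 < k) ∧
        f.Dom = {s | ∃ p, s ∈ D p} ∧
        (∀ s, ∀ k ∈ f s, {p : List Bool | s ∈ D p}.ncard ≤ k) := by
  obtain ⟨e, he_primrec, he⟩ := hC.1.exists_primrec_enumeratesGraph
  have hDC : ∀ p s, s ∈ prune e List.length p → s ∈ C p := fun _ _ => mem_of_mem_prune he
  refine ⟨prune e List.length, ⟨.prune he_primrec .list_length, ?_⟩,
    Hm_eq_of_forall_exists_length_le hDC fun _ _ => exists_mem_prune_le he,
    finite_prune_fiber he, pruneBound e List.length, .pruneBound he_primrec .list_length,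
    fun _ _ => pos_of_mem_pruneBound, pruneBound_dom he, fun _ _ => ncard_prune_fiber_le⟩
  exact hC.2.mono fun p hp => Part.dom_iff_mem.mpr ⟨_, hDC p _ (Part.get_mem hp)⟩
end

section
/- For every optimal prefix-free machine V there exists an optimal prefix-free machine W such that: (i) H_W(s) = H_V(s) for every finite binary string s; (ii) W⁻¹(s) = {p : W(p) = s} is a finite set for every s; and (iii) there exists a total recursive function f : {0,1}* → ℕ⁺ such that #W⁻¹(s) ≤ f(s) for every s ∈ {0,1}*. -/
open scoped ENNReal

/-!
Restricting an optimal machine `V` to the programs `p` with `|p| ≤ b(V p)`, for a computable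
`b` that bounds `H_V`, keeps every shortest program, so the restricted machine is still optimal
with the same complexity function, while each fiber now consists of strings of length at most
`b s`. A computable `b` exists by optimality of `V` applied to the self-delimiting doubling code
`s ↦ s₁s₁s₂s₂…sₙsₙ10`, which gives `H_V(s) ≤ 2|s| + 2 + d`.
-/

theorem List.ncard_setOf_length_le_le {α : Type*} [Finite α] (n : ℕ) :
    {l : List α | l.length ≤ n}.ncard ≤ (Nat.card α + 1) ^ n := by
  induction n with
  | zero => simp
  | succ n ih =>
    set S := {l : List α | l.length ≤ n}
    have hsub : {l : List α | l.length ≤ n + 1} ⊆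
        insert [] ((fun x : α × List α => x.1 :: x.2) '' (Set.univ ×ˢ S)) := by
      rintro (_ | ⟨a, l⟩) hl
      · exact Set.mem_insert _ _
      · exact Set.mem_insert_of_mem _ ⟨(a, l), ⟨trivial, Nat.succ_le_succ_iff.1 hl⟩, rfl⟩
    have hS : S.Finite := List.finite_length_le α n
    calc {l : List α | l.length ≤ n + 1}.ncard
        ≤ (insert [] ((fun x : α × List α => x.1 :: x.2) '' (Set.univ ×ˢ S))).ncard :=
          Set.ncard_le_ncard hsub ((Set.finite_univ.prod hS).image _ |>.insert _)
      _ ≤ (Set.univ ×ˢ S).ncard + 1 :=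
          (Set.ncard_insert_le _ _).trans
            (Nat.add_le_add_right (Set.ncard_image_le (Set.finite_univ.prod hS)) 1)
      _ = Nat.card α * S.ncard + 1 := by rw [Set.ncard_prod, Set.ncard_univ]
      _ ≤ Nat.card α * (Nat.card α + 1) ^ n + (Nat.card α + 1) ^ n :=
          Nat.add_le_add (Nat.mul_le_mul_left _ ih) (Nat.one_le_pow _ _ (Nat.succ_pos _))
      _ = (Nat.card α + 1) ^ (n + 1) := by ring

def doubleEncode (s : List Bool) : List Bool := (s.flatMap fun b => [b, b]) ++ [true, false]

@[simp] lemma doubleEncode_nil : doubleEncode [] = [true, false] := rfl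

@[simp] lemma doubleEncode_cons (b : Bool) (s : List Bool) :
    doubleEncode (b :: s) = b :: b :: doubleEncode s := by
  simp [doubleEncode]

lemma length_doubleEncode (s : List Bool) : (doubleEncode s).length = 2 * s.length + 2 := by
  induction s with
  | nil => rfl
  | cons b s ih => simp [ih]; omega

lemma eq_of_doubleEncode_prefix : ∀ {s s' : List Bool}, doubleEncode s <+: doubleEncode s' → s = s'
  | [], [], _ => rfl
  | [], b :: s', h => by
    simp only [doubleEncode_nil, doubleEncode_cons, List.cons_prefix_cons] at h
    exact Bool.noConfusion (h.1.trans h.2.1.symm)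
  | _ :: _, [], h => by simpa [length_doubleEncode] using h.length_le
  | a :: s, b :: s', h => by
    simp only [doubleEncode_cons, List.cons_prefix_cons] at h
    rw [h.1, eq_of_doubleEncode_prefix h.2.2]

lemma getD_doubleEncode_two_mul {s : List Bool} {i : ℕ} (hi : i < s.length) :
    (doubleEncode s).getD (2 * i) false = s.getD i false := by
  induction s generalizing i with
  | nil => simp at hi
  | cons b s ih =>
    cases i with
    | zero => simp
    | succ j =>
      rw [show 2 * (j + 1) = 2 * j + 1 + 1 by ring, doubleEncode_cons]
      simpa using ih (Nat.succ_lt_succ_iff.1 hi)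

def undouble (p : List Bool) : List Bool :=
  (List.range ((p.length - 2) / 2)).map fun i => p.getD (2 * i) false

lemma undouble_doubleEncode (s : List Bool) : undouble (doubleEncode s) = s := by
  have hlen : ((doubleEncode s).length - 2) / 2 = s.length := by
    rw [length_doubleEncode]; omega
  refine List.ext_getElem (by simp [undouble, hlen]) fun i hi hi' => ?_
  simp only [undouble, hlen, List.getElem_map, List.getElem_range]
  rw [getD_doubleEncode_two_mul hi', List.getD_eq_getElem _ _ hi']

def doubleDecode (p : List Bool) : Option (List Bool) :=
  if doubleEncode (undouble p) = p then some (undouble p) else none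

lemma doubleDecode_eq_some_iff {p s : List Bool} : doubleDecode p = some s ↔ p = doubleEncode s := by
  unfold doubleDecode
  split_ifs with h
  · rw [Option.some_inj]
    exact ⟨fun hs => hs ▸ h.symm, fun hp => hp ▸ undouble_doubleEncode s⟩
  · simp only [false_iff]
    rintro rfl
    exact h (by rw [undouble_doubleEncode])

lemma primrec_doubleDecode : Primrec doubleDecode := by
  have hundouble : Primrec undouble :=
    Primrec.list_map
      (Primrec.list_range.comp (Primrec.nat_div.comp
        (Primrec.nat_sub.comp Primrec.list_length (Primrec.const 2)) (Primrec.const 2)))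
      ((Primrec.list_getD false).comp Primrec.fst
        (Primrec.nat_mul.comp (Primrec.const 2) Primrec.snd)).to₂
  have hencode : Primrec doubleEncode :=
    Primrec.list_append.comp
      (Primrec.list_flatMap Primrec.id ((Primrec.list_cons.comp Primrec.snd
        (Primrec.list_cons.comp Primrec.snd (Primrec.const []))).to₂))
      (Primrec.const [true, false])
  exact Primrec.ite (Primrec.eq.comp (hencode.comp hundouble) Primrec.id)
    (Primrec.option_some.comp hundouble) (Primrec.const none)

def doubleMachine : List Bool →. List Bool := fun p => doubleDecode p

lemma mem_doubleMachine {p s : List Bool} : s ∈ doubleMachine p ↔ p = doubleEncode s := by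
  rw [doubleMachine, Part.mem_ofOption, Option.mem_def, doubleDecode_eq_some_iff]

lemma pfMachine_doubleMachine : PFMachine doubleMachine := by
  refine ⟨Computable.ofOption primrec_doubleDecode.to_comp, fun p hp q hq hpq => ?_⟩
  obtain ⟨s, hs⟩ := Part.dom_iff_mem.1 hp
  obtain ⟨s', hs'⟩ := Part.dom_iff_mem.1 hq
  rw [mem_doubleMachine] at hs hs'
  subst hs hs'
  rw [eq_of_doubleEncode_prefix hpq]

lemma OptimalPFM.exists_forall_length_le {V : List Bool →. List Bool} (hV : OptimalPFM V) :
    ∃ d, ∀ s, ∃ q, s ∈ V q ∧ q.length ≤ 2 * s.length + 2 + d := by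
  obtain ⟨d, hd⟩ := hV.2 _ pfMachine_doubleMachine
  refine ⟨d, fun s => ?_⟩
  obtain ⟨q, hq, hlen⟩ := hd (doubleEncode s) s (mem_doubleMachine.2 rfl)
  exact ⟨q, hq, by rwa [length_doubleEncode] at hlen⟩

lemma Hm_le_Hm_of_fiber_subset {V W : List Bool →. List Bool} {s : List Bool}
    (h : {p | s ∈ W p} ⊆ {p | s ∈ V p}) : Hm V s ≤ Hm W s :=
  sInf_le_sInf (Set.image_mono h)

lemma Hm_le_Hm_of_forall_exists_length_le {V W : List Bool →. List Bool} {s : List Bool}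
    (h : ∀ q, s ∈ V q → ∃ q', s ∈ W q' ∧ q'.length ≤ q.length) : Hm W s ≤ Hm V s := by
  refine le_sInf ?_
  rintro _ ⟨q, hq, rfl⟩
  obtain ⟨q', hq', hle⟩ := h q hq
  exact sInf_le_of_le ⟨q', hq', rfl⟩ (Nat.cast_le.2 hle)

section RestrictLength

variable {V : List Bool →. List Bool} {b : List Bool → ℕ}

def restrictLength (V : List Bool →. List Bool) (b : List Bool → ℕ) : List Bool →. List Bool :=
  fun p => (V p).bind fun s => (if p.length ≤ b s then some s else none : Option (List Bool))

lemma mem_restrictLength {p s : List Bool} :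
    s ∈ restrictLength V b p ↔ s ∈ V p ∧ p.length ≤ b s := by
  simp only [restrictLength, Part.mem_bind_iff, Part.mem_ofOption, Option.mem_def,
    Option.ite_none_right_eq_some, Option.some_inj]
  exact ⟨fun ⟨_, hs, hle, rfl⟩ => ⟨hs, hle⟩, fun ⟨hs, hle⟩ => ⟨s, hs, hle, rfl⟩⟩

lemma PFMachine.restrictLength (hV : PFMachine V) (hb : Computable b) :
    PFMachine (restrictLength V b) := by
  have hcond : Computable₂ fun (p s : List Bool) => decide (p.length ≤ b s) :=
    (Primrec.nat_le.decide.to_comp.comp (Computable.list_length.comp Computable.fst)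
      (hb.comp Computable.snd)).to₂
  have hguard : Computable₂ fun (p s : List Bool) =>
      (if p.length ≤ b s then some s else none : Option (List Bool)) :=
    (Computable.cond hcond (Computable.option_some.comp Computable.snd)
      (Computable.const none)).of_eq fun x => by simp [Bool.cond_decide]
  refine ⟨hV.1.bind (Computable.ofOption hguard).to₂, fun p hp q hq hpq => ?_⟩
  obtain ⟨s, hs⟩ := Part.dom_iff_mem.1 hp
  obtain ⟨s', hs'⟩ := Part.dom_iff_mem.1 hq
  exact hV.2 p (Part.dom_iff_mem.2 ⟨s, (mem_restrictLength.1 hs).1⟩)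
    q (Part.dom_iff_mem.2 ⟨s', (mem_restrictLength.1 hs').1⟩) hpq

lemma exists_mem_restrictLength_length_le {s q : List Bool}
    (hb : ∃ q, s ∈ V q ∧ q.length ≤ b s) (hq : s ∈ V q) :
    ∃ q', s ∈ restrictLength V b q' ∧ q'.length ≤ q.length := by
  classical
  have hex : ∃ n, ∃ q, s ∈ V q ∧ q.length = n := ⟨_, q, hq, rfl⟩
  obtain ⟨q₀, hq₀, hlen₀⟩ := Nat.find_spec hex
  have hmin : ∀ q, s ∈ V q → q₀.length ≤ q.length := fun q hq =>
    hlen₀ ▸ Nat.find_min' hex ⟨q, hq, rfl⟩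
  obtain ⟨qb, hqb, hqb_le⟩ := hb
  exact ⟨q₀, mem_restrictLength.2 ⟨hq₀, (hmin qb hqb).trans hqb_le⟩, hmin q hq⟩

lemma OptimalPFM.restrictLength (hV : OptimalPFM V) (hb : Computable b)
    (hbV : ∀ s, ∃ q, s ∈ V q ∧ q.length ≤ b s) : OptimalPFM (restrictLength V b) := by
  refine ⟨hV.1.restrictLength hb, fun C hC => ?_⟩
  obtain ⟨d, hd⟩ := hV.2 C hC
  refine ⟨d, fun p s hs => ?_⟩
  obtain ⟨q, hq, hqp⟩ := hd p s hs
  obtain ⟨q', hq', hq'q⟩ := exists_mem_restrictLength_length_le (hbV s) hq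
  exact ⟨q', hq', hq'q.trans hqp⟩

lemma Hm_restrictLength {s : List Bool} (hb : ∃ q, s ∈ V q ∧ q.length ≤ b s) :
    Hm (restrictLength V b) s = Hm V s :=
  le_antisymm
    (Hm_le_Hm_of_forall_exists_length_le fun _ hq => exists_mem_restrictLength_length_le hb hq)
    (Hm_le_Hm_of_fiber_subset fun _ hp => (mem_restrictLength.1 hp).1)

lemma fiber_restrictLength_subset (s : List Bool) :
    {p | s ∈ restrictLength V b p} ⊆ {p | p.length ≤ b s} :=
  fun _ hp => (mem_restrictLength.1 hp).2

lemma finite_fiber_restrictLength (s : List Bool) : {p | s ∈ restrictLength V b p}.Finite :=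
  (List.finite_length_le Bool (b s)).subset (fiber_restrictLength_subset s)

lemma ncard_fiber_restrictLength_le (s : List Bool) :
    {p | s ∈ restrictLength V b p}.ncard ≤ 3 ^ b s := by
  calc {p | s ∈ restrictLength V b p}.ncard
      ≤ {p : List Bool | p.length ≤ b s}.ncard :=
        Set.ncard_le_ncard (fiber_restrictLength_subset s) (List.finite_length_le Bool (b s))
    _ ≤ (Nat.card Bool + 1) ^ b s := List.ncard_setOf_length_le_le (b s)
    _ = 3 ^ b s := by simp

end RestrictLength

/-- For every optimal prefix-free machine `V` there is an optimal prefix-free machine `W` with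
(i) `H_W = H_V`, (ii) every `W⁻¹(s)` finite, and (iii) a total recursive
`f : {0,1}* → ℕ⁺` with `#W⁻¹(s) ≤ f(s)` for every `s`. -/
theorem exists_optimal_machine_finite_fibers (V : List Bool →. List Bool)
    (hV : OptimalPFM V) :
    ∃ W : List Bool →. List Bool, OptimalPFM W ∧
      (∀ s, Hm W s = Hm V s) ∧
      (∀ s, {p : List Bool | s ∈ W p}.Finite) ∧
      ∃ f : List Bool → ℕ, Computable f ∧ (∀ s, 0 < f s) ∧
        (∀ s, {p : List Bool | s ∈ W p}.ncard ≤ f s) := by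
  obtain ⟨d, hd⟩ := hV.exists_forall_length_le
  set b : List Bool → ℕ := fun s => 2 * s.length + 2 + d
  have hb : Primrec b :=
    Primrec.nat_add.comp (Primrec.nat_add.comp
      (Primrec.nat_mul.comp (Primrec.const 2) Primrec.list_length) (Primrec.const 2))
      (Primrec.const d)
  refine ⟨restrictLength V b, hV.restrictLength hb.to_comp hd, fun s => Hm_restrictLength (hd s),
    finite_fiber_restrictLength, fun s => 3 ^ b s, ?_, fun s => by positivity,
    ncard_fiber_restrictLength_le⟩
  exact ((Primrec₂.unpaired'.1 Nat.Primrec.pow).comp (Primrec.const 3) hb).to_comp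
end

section
/- Let V be an optimal prefix-free machine and let f : {0,1}* → ℕ be a right-computable function such that #V⁻¹(s) ≤ f(s) for all finite binary strings s (in particular each V⁻¹(s) is finite). Then #V⁻¹(s) < f(s) for all but finitely many s ∈ {0,1}*. -/
set_option maxHeartbeats 2000000
namespace CardFiberAux

open Nat.Partrec (Code)
open Nat.Partrec.Code Encodable


theorem primrec_filterMap {α β σ} [Primcodable α] [Primcodable β] [Primcodable σ]
    {f : α → List β} {g : α → β → Option σ} (hf : Primrec f) (hg : Primrec₂ g) :
    Primrec fun a => (f a).filterMap (g a) := by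
  have hstep : Primrec fun x : α × β × List σ =>
      Option.casesOn (motive := fun _ => List σ) (g x.1 x.2.1) x.2.2 (fun c => c :: x.2.2) :=
    Primrec.option_casesOn
      (hg.comp Primrec.fst (Primrec.fst.comp Primrec.snd))
      (Primrec.snd.comp Primrec.snd)
      (Primrec.to₂ <| Primrec.list_cons.comp Primrec.snd
        (Primrec.snd.comp (Primrec.snd.comp Primrec.fst)))
  have h := Primrec.list_foldr
    (h := fun a (p : β × List σ) =>
      Option.casesOn (motive := fun _ => List σ) (g a p.1) p.2 (fun c => c :: p.2))
    hf (Primrec.const []) (Primrec.to₂ hstep)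
  refine h.of_eq fun a => ?_
  induction (f a) with
  | nil => rfl
  | cons b l ih =>
      simp only [List.foldr_cons, ih, List.filterMap_cons]
      cases g a b <;> rfl

/-- The list of "long" programs for `s` found with budget `b`:
programs `p` with `3*n ≤ |p|` such that `evaln b cV (encode p) = some (encode s)`. -/
def psL (cV : Code) (x : (ℕ × ℕ) × List Bool) : List (List Bool) :=
  (List.range x.1.2).filterMap fun i =>
    (Encodable.decode (α := List Bool) i).bind fun p =>
      if Encodable.encode p = i ∧ evaln x.1.2 cV i = some (Encodable.encode x.2)
          ∧ 3 * x.1.1 ≤ p.length then some p else none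

theorem psL_primrec (cV : Code) : Primrec (psL cV) := by
  have hinner : Primrec fun y : (((ℕ × ℕ) × List Bool) × ℕ) × List Bool =>
      if Encodable.encode y.2 = y.1.2 ∧ evaln y.1.1.1.2 cV y.1.2 = some (Encodable.encode y.1.1.2)
          ∧ 3 * y.1.1.1.1 ≤ y.2.length then (some y.2 : Option (List Bool)) else none := by
    apply Primrec.ite
    · apply PrimrecPred.and
      · exact Primrec.eq.comp (Primrec.encode.comp Primrec.snd)
          (Primrec.snd.comp Primrec.fst)
      apply PrimrecPred.and
      · exact Primrec.eq.comp
          (primrec_evaln.comp <| Primrec.pair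
            (Primrec.pair
              (Primrec.snd.comp <| Primrec.fst.comp <| Primrec.fst.comp Primrec.fst)
              (Primrec.const cV))
            (Primrec.snd.comp Primrec.fst))
          (Primrec.option_some.comp <| Primrec.encode.comp <|
            Primrec.snd.comp <| Primrec.fst.comp Primrec.fst)
      · exact Primrec.nat_le.comp
          (Primrec.nat_mul.comp (Primrec.const 3)
            (Primrec.fst.comp <| Primrec.fst.comp <| Primrec.fst.comp Primrec.fst))
          (Primrec.list_length.comp Primrec.snd)
    · exact Primrec.option_some.comp Primrec.snd
    · exact Primrec.const none
  have hg : Primrec fun y : ((ℕ × ℕ) × List Bool) × ℕ =>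
      (Encodable.decode (α := List Bool) y.2).bind fun p =>
        if Encodable.encode p = y.2 ∧ evaln y.1.1.2 cV y.2 = some (Encodable.encode y.1.2)
            ∧ 3 * y.1.1.1 ≤ p.length then some p else none :=
    Primrec.option_bind (Primrec.decode.comp Primrec.snd) (Primrec.to₂ hinner)
  exact primrec_filterMap (Primrec.list_range.comp (Primrec.snd.comp Primrec.fst))
    (Primrec.to₂ hg)

/-- The search predicate: `k` codes a triple `(encode s, m, b)`; succeeds with value `s` if
`f s ≤ m` is certified at budget `b` and at least `m` long programs for `s` were found. -/
def Fc (cV cf : Code) (n k : ℕ) : Option (List Bool) :=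
  (Encodable.decode (α := List Bool) k.unpair.1).bind fun s =>
    if (evaln k.unpair.2.unpair.2 cf (Encodable.encode (s, k.unpair.2.unpair.1))).isSome = true
        ∧ k.unpair.2.unpair.1 ≤ (psL cV ((n, k.unpair.2.unpair.2), s)).length
    then some s else none

theorem Fc_primrec (cV cf : Code) : Primrec₂ (Fc cV cf) := by
  have hm : Primrec fun x : (ℕ × ℕ) × List Bool => x.1.2.unpair.2.unpair.1 :=
    Primrec.fst.comp <| Primrec.unpair.comp <| Primrec.snd.comp <|
      Primrec.unpair.comp <| Primrec.snd.comp Primrec.fst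
  have hb : Primrec fun x : (ℕ × ℕ) × List Bool => x.1.2.unpair.2.unpair.2 :=
    Primrec.snd.comp <| Primrec.unpair.comp <| Primrec.snd.comp <|
      Primrec.unpair.comp <| Primrec.snd.comp Primrec.fst
  have hinner : Primrec fun x : (ℕ × ℕ) × List Bool =>
      if (evaln x.1.2.unpair.2.unpair.2 cf
            (Encodable.encode (x.2, x.1.2.unpair.2.unpair.1))).isSome = true
          ∧ x.1.2.unpair.2.unpair.1 ≤ (psL cV ((x.1.1, x.1.2.unpair.2.unpair.2), x.2)).length
      then (some x.2 : Option (List Bool)) else none := by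
    apply Primrec.ite
    · apply PrimrecPred.and
      · exact Primrec.eq.comp
          (Primrec.option_isSome.comp <| primrec_evaln.comp <| Primrec.pair
            (Primrec.pair hb (Primrec.const cf))
            (Primrec.encode.comp <| Primrec.pair Primrec.snd hm))
          (Primrec.const true)
      · exact Primrec.nat_le.comp hm
          (Primrec.list_length.comp <| (psL_primrec cV).comp <| Primrec.pair
            (Primrec.pair (Primrec.fst.comp Primrec.fst) hb) Primrec.snd)
    · exact Primrec.option_some.comp Primrec.snd
    · exact Primrec.const none
  have h : Primrec fun x : ℕ × ℕ => Fc cV cf x.1 x.2 :=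
    Primrec.option_bind
      (Primrec.decode.comp <| Primrec.fst.comp <| Primrec.unpair.comp Primrec.snd)
      (Primrec.to₂ hinner)
  exact h

theorem psL_mem_iff {cV : Code} {n b : ℕ} {s p : List Bool} :
    p ∈ psL cV ((n, b), s) ↔ Encodable.encode p < b ∧
      evaln b cV (Encodable.encode p) = some (Encodable.encode s) ∧ 3 * n ≤ p.length := by
  constructor
  · intro h
    rcases List.mem_filterMap.1 h with ⟨i, hir, hi⟩
    rcases Option.bind_eq_some_iff.1 hi with ⟨p', hp', hif⟩
    split_ifs at hif with hc
    have hpp : p' = p := Option.some.inj hif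
    subst hpp
    exact ⟨hc.1 ▸ List.mem_range.1 hir, hc.1 ▸ hc.2.1, hc.2.2⟩
  · rintro ⟨h1, h2, h3⟩
    refine List.mem_filterMap.2 ⟨Encodable.encode p, List.mem_range.2 h1, ?_⟩
    rw [Encodable.encodek, Option.bind_some, if_pos ⟨rfl, h2, h3⟩]

theorem psL_nodup (cV : Code) (x : (ℕ × ℕ) × List Bool) : (psL cV x).Nodup := by
  refine List.Nodup.filterMap ?_ List.nodup_range
  intro i i' p h h'
  have key : ∀ j : ℕ, p ∈ ((Encodable.decode (α := List Bool) j).bind fun q =>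
      if Encodable.encode q = j ∧ evaln x.1.2 cV j = some (Encodable.encode x.2)
          ∧ 3 * x.1.1 ≤ q.length then some q else none) → Encodable.encode p = j := by
    intro j hj
    rcases Option.bind_eq_some_iff.1 hj with ⟨q, hq, hif⟩
    split_ifs at hif with hc
    have hqp : q = p := Option.some.inj hif
    subst hqp
    exact hc.1
  rw [← key i h, ← key i' h']

theorem psL_complete {cV : Code} {V : List Bool →. List Bool}
    (hcV : ∀ p s, s ∈ V p ↔ ∃ b, Encodable.encode s ∈ evaln b cV (Encodable.encode p))
    {n : ℕ} {s : List Bool} (hfin : {p : List Bool | s ∈ V p}.Finite)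
    (hlong : ∀ p, s ∈ V p → 3 * n ≤ p.length) :
    ∃ b, ∀ p, s ∈ V p → p ∈ psL cV ((n, b), s) := by
  classical
  set F := hfin.toFinset with hF
  let g : List Bool → ℕ := fun p =>
    if h : ∃ b, Encodable.encode s ∈ evaln b cV (Encodable.encode p) then Nat.find h else 0
  refine ⟨(F.sup fun p => max (g p) (Encodable.encode p + 1)), fun p hp => ?_⟩
  set b := F.sup fun p => max (g p) (Encodable.encode p + 1) with hb
  have hpF : p ∈ F := hfin.mem_toFinset.2 hp
  have hsup : max (g p) (Encodable.encode p + 1) ≤ b :=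
    Finset.le_sup (f := fun p => max (g p) (Encodable.encode p + 1)) hpF
  have hex : ∃ b', Encodable.encode s ∈ evaln b' cV (Encodable.encode p) := (hcV p s).1 hp
  have hgp : Encodable.encode s ∈ evaln (g p) cV (Encodable.encode p) := by
    simp only [g, dif_pos hex]
    exact Nat.find_spec hex
  have hev : Encodable.encode s ∈ evaln b cV (Encodable.encode p) :=
    evaln_mono (le_trans (le_max_left _ _) hsup) hgp
  exact psL_mem_iff.2 ⟨lt_of_lt_of_le (Nat.lt_succ_self _) (le_trans (le_max_right _ _) hsup),
    Option.mem_def.1 hev, hlong p hp⟩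

theorem Fc_sound {cV cf : Code} {V : List Bool →. List Bool} {f : List Bool → ℕ}
    (hcV : ∀ p s, s ∈ V p ↔ ∃ b, Encodable.encode s ∈ evaln b cV (Encodable.encode p))
    (hcf : ∀ s m, f s ≤ m ↔ ∃ b, (evaln b cf (Encodable.encode (s, m))).isSome = true)
    (hfin : ∀ s, {p : List Bool | s ∈ V p}.Finite)
    (hle : ∀ s, {p : List Bool | s ∈ V p}.ncard ≤ f s)
    {n k : ℕ} {t : List Bool} (h : Fc cV cf n k = some t) :
    ∀ p, t ∈ V p → 3 * n ≤ p.length := by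
  classical
  rcases Option.bind_eq_some_iff.1 h with ⟨s, hs, hif⟩
  set m := k.unpair.2.unpair.1 with hm
  set b := k.unpair.2.unpair.2 with hbb
  split_ifs at hif with hc
  have hst : s = t := Option.some.inj hif
  subst hst
  have hfs : f s ≤ m := (hcf s m).2 ⟨b, hc.1⟩
  set D := psL cV ((n, b), s) with hD
  have hDsub : ↑D.toFinset ⊆ {p : List Bool | s ∈ V p} := by
    intro p hp
    have hp' : p ∈ D := List.mem_toFinset.1 hp
    exact (hcV p s).2 ⟨b, Option.mem_def.2 (psL_mem_iff.1 hp').2.1⟩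
  have hcard : {p : List Bool | s ∈ V p}.ncard ≤ (↑D.toFinset : Set (List Bool)).ncard := by
    rw [Set.ncard_coe_finset, List.toFinset_card_of_nodup (psL_nodup cV _)]
    exact le_trans (le_trans (hle s) hfs) hc.2
  have heq : (↑D.toFinset : Set (List Bool)) = {p : List Bool | s ∈ V p} :=
    Set.eq_of_subset_of_ncard_le hDsub hcard (hfin s)
  intro p hp
  have hp2 : p ∈ (↑D.toFinset : Set (List Bool)) := by rw [heq]; exact hp
  have hpD : p ∈ D := List.mem_toFinset.1 hp2
  exact (psL_mem_iff.1 hpD).2.2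

theorem Fc_complete {cV cf : Code} {V : List Bool →. List Bool} {f : List Bool → ℕ}
    (hcV : ∀ p s, s ∈ V p ↔ ∃ b, Encodable.encode s ∈ evaln b cV (Encodable.encode p))
    (hcf : ∀ s m, f s ≤ m ↔ ∃ b, (evaln b cf (Encodable.encode (s, m))).isSome = true)
    {n : ℕ} {s : List Bool} (hfin : {p : List Bool | s ∈ V p}.Finite)
    (hA : f s ≤ {p : List Bool | s ∈ V p}.ncard)
    (hlong : ∀ p, s ∈ V p → 3 * n ≤ p.length) :
    ∃ k, Fc cV cf n k = some s := by
  classical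
  obtain ⟨b₀, hb₀⟩ := psL_complete hcV hfin hlong
  obtain ⟨b₁, hb₁⟩ := (hcf s (f s)).1 le_rfl
  set b := max b₀ b₁ with hb
  have hb₀' : ∀ p, s ∈ V p → p ∈ psL cV ((n, b), s) := by
    intro p hp
    rcases psL_mem_iff.1 (hb₀ p hp) with ⟨h1, h2, h3⟩
    exact psL_mem_iff.2 ⟨lt_of_lt_of_le h1 (le_max_left _ _),
      Option.mem_def.1 (evaln_mono (le_max_left _ _) (Option.mem_def.2 h2)), h3⟩
  have hcert : (evaln b cf (Encodable.encode (s, f s))).isSome = true := by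
    rcases Option.isSome_iff_exists.1 hb₁ with ⟨x, hx⟩
    exact Option.isSome_iff_exists.2 ⟨x, Option.mem_def.1
      (evaln_mono (le_max_right _ _) (Option.mem_def.2 hx))⟩
  have hcount : f s ≤ (psL cV ((n, b), s)).length := by
    have hsub : hfin.toFinset ⊆ (psL cV ((n, b), s)).toFinset := by
      intro p hp
      exact List.mem_toFinset.2 (hb₀' p (hfin.mem_toFinset.1 hp))
    calc f s ≤ {p : List Bool | s ∈ V p}.ncard := hA
      _ = hfin.toFinset.card := Set.ncard_eq_toFinset_card _ hfin
      _ ≤ (psL cV ((n, b), s)).toFinset.card := Finset.card_le_card hsub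
      _ = (psL cV ((n, b), s)).length :=
          List.toFinset_card_of_nodup (psL_nodup cV _)
  refine ⟨Nat.pair (Encodable.encode s) (Nat.pair (f s) b), ?_⟩
  unfold Fc
  simp only [Nat.unpair_pair, Encodable.encodek, Option.bind_some]
  rw [if_pos ⟨hcert, hcount⟩]

def M (cV cf : Code) : List Bool →. List Bool :=
  fun l => (Nat.rfindOpt (fun k => Fc cV cf (l.length - 1) k)).bind fun s =>
    Part.ofOption (if l = List.replicate (l.length - 1) true ++ [false] then some s else none)

theorem mem_M_iff {cV cf : Code} {l s : List Bool} :
    s ∈ M cV cf l ↔ s ∈ Nat.rfindOpt (fun k => Fc cV cf (l.length - 1) k) ∧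
      l = List.replicate (l.length - 1) true ++ [false] := by
  unfold M
  rw [Part.mem_bind_iff]
  constructor
  · rintro ⟨s', h1, h2⟩
    split_ifs at h2 with hc
    · rcases Part.mem_ofOption.1 h2 with h3
      cases h3
      exact ⟨h1, hc⟩
    · exact absurd (Part.mem_ofOption.1 h2) (by simp)
  · rintro ⟨h1, h2⟩
    exact ⟨s, h1, by rw [if_pos h2]; exact Part.mem_ofOption.2 rfl⟩

theorem rep_false_prefix : ∀ a b : ℕ,
    List.replicate a true ++ [false] <+: List.replicate b true ++ [false] → a = b := by
  intro a
  induction a with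
  | zero =>
      intro b h
      cases b with
      | zero => rfl
      | succ b =>
          rw [List.replicate_succ, List.cons_append] at h
          rw [show List.replicate 0 true ++ [false] = [false] from rfl] at h
          rcases List.cons_prefix_cons.1 h with ⟨h1, -⟩
          cases h1
  | succ a ih =>
      intro b h
      cases b with
      | zero =>
          rw [List.replicate_succ, List.cons_append] at h
          rcases List.cons_prefix_cons.1 h with ⟨h1, -⟩
          cases h1
      | succ b =>
          rw [List.replicate_succ, List.replicate_succ, List.cons_append,
            List.cons_append] at h
          rcases List.cons_prefix_cons.1 h with ⟨-, h2⟩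
          rw [ih b h2]

theorem M_dom_shape {cV cf : Code} {l : List Bool} (h : l ∈ (M cV cf).Dom) :
    l = List.replicate (l.length - 1) true ++ [false] :=
  (mem_M_iff.1 (Part.get_mem (show (M cV cf l).Dom from h))).2

theorem M_prefixFree (cV cf : Code) : ∀ p ∈ (M cV cf).Dom, ∀ q ∈ (M cV cf).Dom,
    p <+: q → p = q := by
  intro p hp q hq hpq
  have hps := M_dom_shape hp
  have hqs := M_dom_shape hq
  have := rep_false_prefix _ _ (hps ▸ hqs ▸ hpq)
  apply hpq.eq_of_length
  rw [hps, hqs]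
  simp [this]


theorem M_partrec (cV cf : Code) : Partrec (M cV cf) := by
  have hFc : Primrec fun x : List Bool × ℕ => Fc cV cf (x.1.length - 1) x.2 :=
    (Fc_primrec cV cf).comp
      (Primrec.nat_sub.comp (Primrec.list_length.comp Primrec.fst) (Primrec.const 1))
      Primrec.snd
  have h1 : Partrec fun l : List Bool => Nat.rfindOpt (fun k => Fc cV cf (l.length - 1) k) :=
    Partrec.rfindOpt hFc.to₂.to_comp
  have hrepl : Primrec fun m : ℕ => List.replicate m true := by
    have h := Primrec.list_map Primrec.list_range (Primrec.to₂ (Primrec.const true))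
    refine h.of_eq fun m => ?_
    simp
  have hP : PrimrecPred fun l : List Bool => l = List.replicate (l.length - 1) true ++ [false] :=
    Primrec.eq.comp Primrec.id
      (Primrec.list_append.comp
        (hrepl.comp (Primrec.nat_sub.comp Primrec.list_length (Primrec.const 1)))
        (Primrec.const [false]))
  have hg : Computable fun x : List Bool × List Bool =>
      (if x.1 = List.replicate (x.1.length - 1) true ++ [false] then some x.2 else none :
        Option (List Bool)) :=
    Primrec.to_comp (Primrec.ite (hP.comp Primrec.fst)
      (Primrec.option_some.comp Primrec.snd) (Primrec.const none))
  have h2 := Computable.ofOption hg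
  exact h1.bind h2.to₂

end CardFiberAux

open scoped ENNReal

/-- `f` is right-computable if `{(s,n) | f s ≤ n}` is r.e. -/
def RightComputable (f : List Bool → ℕ) : Prop :=
  REPred fun q : List Bool × ℕ => f q.1 ≤ q.2

/-- If `V` is optimal and `#V⁻¹(s) ≤ f(s)` for all `s` (each `V⁻¹(s)` finite) with `f`
right-computable, then `#V⁻¹(s) < f(s)` for all but finitely many `s`. -/
theorem card_fiber_lt_of_rightComputable (V : List Bool →. List Bool)
    (hV : OptimalPFM V) (f : List Bool → ℕ) (hf : RightComputable f)
    (hfin : ∀ s, {p : List Bool | s ∈ V p}.Finite)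
    (hle : ∀ s, {p : List Bool | s ∈ V p}.ncard ≤ f s) :
    {s : List Bool | f s ≤ {p : List Bool | s ∈ V p}.ncard}.Finite := by
  classical
  by_contra hinf
  -- obtain codes for `V` and for the certification of `f`
  have hVpart : Nat.Partrec fun n =>
      Part.bind (↑(Encodable.decode (α := List Bool) n) : Part (List Bool))
        fun a => (V a).map Encodable.encode :=
    hV.1.1
  obtain ⟨cV, hcV0⟩ := Nat.Partrec.Code.exists_code.1 hVpart
  have hfpart : Nat.Partrec fun n =>
      Part.bind (↑(Encodable.decode (α := List Bool × ℕ) n) : Part (List Bool × ℕ))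
        fun q => (Part.assert (f q.1 ≤ q.2) fun _ => Part.some ()).map Encodable.encode :=
    hf
  obtain ⟨cf, hcf0⟩ := Nat.Partrec.Code.exists_code.1 hfpart
  have hcV : ∀ p s, s ∈ V p ↔ ∃ b,
      Encodable.encode s ∈ Nat.Partrec.Code.evaln b cV (Encodable.encode p) := by
    intro p s
    have h1 : Encodable.encode s ∈ Nat.Partrec.Code.eval cV (Encodable.encode p) ↔ s ∈ V p := by
      rw [hcV0]
      simp [Encodable.encodek, Part.mem_map_iff]
    rw [← h1, Nat.Partrec.Code.evaln_complete]
  have hcf : ∀ s m, f s ≤ m ↔ ∃ b,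
      (Nat.Partrec.Code.evaln b cf (Encodable.encode (s, m))).isSome = true := by
    intro s m
    have h1 : (Nat.Partrec.Code.eval cf (Encodable.encode (s, m))).Dom ↔ f s ≤ m := by
      rw [hcf0]
      simp [Encodable.encodek, Part.assert]
    constructor
    · intro h
      obtain ⟨x, hx⟩ := Part.dom_iff_mem.1 (h1.2 h)
      obtain ⟨b, hb⟩ := Nat.Partrec.Code.evaln_complete.1 hx
      exact ⟨b, Option.isSome_iff_exists.2 ⟨x, hb⟩⟩
    · rintro ⟨b, hb⟩
      obtain ⟨x, hx⟩ := Option.isSome_iff_exists.1 hb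
      exact h1.1 (Part.dom_iff_mem.2 ⟨x, Nat.Partrec.Code.evaln_sound hx⟩)
  -- the machine `M cV cf` is a prefix-free machine
  have hM : PFMachine (CardFiberAux.M cV cf) :=
    ⟨CardFiberAux.M_partrec cV cf, CardFiberAux.M_prefixFree cV cf⟩
  obtain ⟨d, hd⟩ := hV.2 _ hM
  set n := d + 2 with hn
  -- find an `s` with `f s ≤ #V⁻¹(s)` all of whose programs are long
  have hBadfin : {s : List Bool | ∃ p, s ∈ V p ∧ p.length < 3 * n}.Finite := by
    have h2 : (⋃ p ∈ {q : List Bool | q.length < 3 * n}, {s : List Bool | s ∈ V p}).Finite :=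
      Set.Finite.biUnion (List.finite_length_lt Bool (3 * n)) (fun p _ =>
        Set.Subsingleton.finite (fun a ha b hb => Part.mem_unique ha hb))
    refine h2.subset ?_
    rintro s ⟨p, hp, hlp⟩
    exact Set.mem_biUnion hlp hp
  have hAinf : {s : List Bool | f s ≤ {p : List Bool | s ∈ V p}.ncard}.Infinite := hinf
  obtain ⟨s, hsA, hsB⟩ := (hAinf.diff hBadfin).nonempty
  have hlong : ∀ p, s ∈ V p → 3 * n ≤ p.length := fun p hp =>
    not_lt.1 fun hlp => hsB ⟨p, hp, hlp⟩
  obtain ⟨k, hk⟩ := CardFiberAux.Fc_complete hcV hcf (hfin s) hsA hlong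
  have hdom : (Nat.rfindOpt (fun k => CardFiberAux.Fc cV cf n k)).Dom :=
    Nat.rfindOpt_dom.2 ⟨k, s, hk⟩
  set t0 := (Nat.rfindOpt (fun k => CardFiberAux.Fc cV cf n k)).get hdom with ht0def
  have ht0 : t0 ∈ Nat.rfindOpt (fun k => CardFiberAux.Fc cV cf n k) := Part.get_mem hdom
  obtain ⟨k0, hk0⟩ := Nat.rfindOpt_spec ht0
  have hlong0 : ∀ p, t0 ∈ V p → 3 * n ≤ p.length :=
    CardFiberAux.Fc_sound hcV hcf hfin hle (Option.mem_def.1 hk0)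
  set l := List.replicate n true ++ [false] with hldef
  have hlen : l.length = n + 1 := by simp [hldef]
  have hlen1 : l.length - 1 = n := by rw [hlen]; omega
  have hMl : t0 ∈ CardFiberAux.M cV cf l :=
    CardFiberAux.mem_M_iff.2 ⟨by rw [hlen1]; exact ht0, by rw [hlen1]⟩
  obtain ⟨q, hqV, hqlen⟩ := hd l t0 hMl
  have h3 := hlong0 q hqV
  rw [hlen] at hqlen
  omega
end

section
/- Let V be an optimal prefix-free machine and let f : {0,1}* → ℕ be a right-computable function such that #V⁻¹(s) ≤ f(s) for all finite binary strings s. Then f(s) − #V⁻¹(s) tends to infinity as s → ∞, where finite binary strings are identified with natural numbers via the bijection φ(s) = (the dyadic integer 1s) − 1; that is, for every M ∈ ℕ, f(s) − #V⁻¹(s) ≥ M for all but finitely many s. -/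
open scoped ENNReal

/-!
Induct on `c`: if `f s < #V⁻¹(s) + c` for only finitely many `s`, then `f s = #V⁻¹(s) + c` for
only finitely many `s`. For such a tight `s`, once an enumeration of `V` has found `#V⁻¹(s)`
programs for `s`, the enumeration witnessing right-computability confirms `f s ≤ m + c` for the
count `m` found so far; conversely, for `s` outside the finite exceptional set such a
confirmation certifies that all programs for `s` have been found. With infinitely many tight `s`,
the machine that on input `0ᵏ1` searches for a long string certified in this way whose programs
all have length `≥ 2k` halts for every `k`, and its output has no `V`-program shorter than `2k`,
while optimality of `V` provides one of length `≤ k + O(1)`.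
-/

open Encodable Filter

section StageApprox

variable {α σ : Type*}

structure IsStageApprox (g : α →. σ) (G : ℕ → α → Option σ) : Prop where
  mem_of_eq_some : ∀ {t a b}, G t a = some b → b ∈ g a
  eventually_eq_some : ∀ {a b}, b ∈ g a → ∀ᶠ t in atTop, G t a = some b

variable [Primcodable α] [Primcodable σ]

theorem Partrec.exists_isStageApprox {g : α →. σ} (hg : Partrec g) :
    ∃ G : ℕ → α → Option σ, Primrec₂ G ∧ IsStageApprox g G := by
  obtain ⟨c, hc⟩ := Nat.Partrec.Code.exists_code.1 hg
  refine ⟨fun t a => (Nat.Partrec.Code.evaln t c (encode a)).bind decode, ?_, ?_, ?_⟩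
  · exact Primrec.option_bind (Nat.Partrec.Code.primrec_evaln.comp
      ((Primrec.fst.pair (Primrec.const c)).pair (Primrec.encode.comp Primrec.snd)))
      (Primrec.decode.comp Primrec.snd).to₂
  · intro t a b h
    obtain ⟨m, hm, hmb⟩ := Option.bind_eq_some_iff.1 h
    have := Nat.Partrec.Code.evaln_sound hm
    simp only [hc, encodek, Part.coe_some, Part.bind_some, Part.mem_map_iff] at this
    obtain ⟨b', hb', rfl⟩ := this
    rw [encodek, Option.some_inj] at hmb
    exact hmb ▸ hb'
  · intro a b h
    have : encode b ∈ Nat.Partrec.Code.eval c (encode a) := by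
      simpa [hc, encodek] using Part.mem_map encode h
    obtain ⟨t₀, ht₀⟩ := Nat.Partrec.Code.evaln_complete.1 this
    filter_upwards [eventually_ge_atTop t₀] with t ht
    rw [Option.mem_def.1 (Nat.Partrec.Code.evaln_mono ht ht₀)]
    simp [encodek]

theorem REPred.exists_stage {p : α → Prop} (hp : REPred p) :
    ∃ H : ℕ → α → Bool, Primrec₂ H ∧ (∀ t a, H t a → p a) ∧
      ∀ a, p a → ∀ᶠ t in atTop, H t a := by
  obtain ⟨G, hGp, hG⟩ := Partrec.exists_isStageApprox hp
  refine ⟨fun t a => (G t a).isSome, Primrec.option_isSome.comp hGp, fun t a h => ?_,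
    fun a ha => ?_⟩
  · obtain ⟨u, hu⟩ := Option.isSome_iff_exists.1 h
    exact (Part.mem_assert_iff.1 (hG.mem_of_eq_some hu)).1
  · filter_upwards [hG.eventually_eq_some (Part.mem_assert ha (Part.mem_some ()))] with t ht
    simp [ht]

end StageApprox

theorem List.Nodup.ncard_setOf_mem {α : Type*} {l : List α} (h : l.Nodup) :
    {a | a ∈ l}.ncard = l.length := by
  classical
  rw [← List.toFinset_card_of_nodup h, ← Set.ncard_coe_finset]
  simp

section StageFiber

variable {α σ : Type*} [Primcodable α] [DecidableEq σ]

def stageFiber (G : ℕ → α → Option σ) (t : ℕ) (b : σ) : List α :=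
  ((List.range t).filterMap (decode₂ α)).filter fun a => G t a = some b

variable {G : ℕ → α → Option σ} {t : ℕ} {a : α} {b : σ}

theorem mem_stageFiber : a ∈ stageFiber G t b ↔ encode a < t ∧ G t a = some b := by
  simp [stageFiber, decode₂_eq_some]

theorem nodup_stageFiber : (stageFiber G t b).Nodup :=
  (List.nodup_range.filterMap fun _ _ _ h h' =>
    (mem_decode₂.1 h).symm.trans (mem_decode₂.1 h')).filter _

theorem primrec₂_stageFiber [Primcodable σ] (hG : Primrec₂ G) : Primrec₂ (stageFiber G) := by
  have hR : PrimrecRel fun (a : α) (x : ℕ × σ) => G x.1 a = some x.2 :=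
    Primrec.eq.comp₂ (hG.comp₂ (Primrec.fst.comp₂ Primrec₂.right) Primrec₂.left)
      (Primrec.option_some.comp₂ (Primrec.snd.comp₂ Primrec₂.right))
  exact (hR.listFilter.comp (Primrec.listFilterMap (Primrec.list_range.comp Primrec.fst)
    (Primrec.decode₂.comp Primrec.snd).to₂) Primrec.id)

namespace IsStageApprox

variable {g : α →. σ} (hG : IsStageApprox g G)
include hG

theorem mem_of_mem_stageFiber (h : a ∈ stageFiber G t b) : b ∈ g a :=
  hG.mem_of_eq_some (mem_stageFiber.1 h).2

theorem eventually_forall_mem_stageFiber (hfin : {a | b ∈ g a}.Finite) :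
    ∀ᶠ t in atTop, ∀ a, b ∈ g a → a ∈ stageFiber G t b := by
  have := (eventually_all_finite hfin).2 fun a (ha : b ∈ g a) =>
    (eventually_gt_atTop (encode a)).and (hG.eventually_eq_some ha)
  exact this.mono fun t ht a ha => mem_stageFiber.2 (ht a ha)

theorem setOf_mem_stageFiber_subset : {a | a ∈ stageFiber G t b} ⊆ {a | b ∈ g a} :=
  fun _ => hG.mem_of_mem_stageFiber

theorem mem_stageFiber_of_ncard_le (hfin : {a | b ∈ g a}.Finite)
    (hle : {a | b ∈ g a}.ncard ≤ (stageFiber G t b).length) (ha : b ∈ g a) :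
    a ∈ stageFiber G t b := by
  rw [← nodup_stageFiber.ncard_setOf_mem] at hle
  have := Set.eq_of_subset_of_ncard_le hG.setOf_mem_stageFiber_subset hle hfin
  exact this.symm.subset ha

theorem eventually_length_stageFiber_eq_ncard (hfin : {a | b ∈ g a}.Finite) :
    ∀ᶠ t in atTop, (stageFiber G t b).length = {a | b ∈ g a}.ncard := by
  filter_upwards [hG.eventually_forall_mem_stageFiber hfin] with t ht
  rw [← nodup_stageFiber.ncard_setOf_mem, hG.setOf_mem_stageFiber_subset.antisymm ht]

end IsStageApprox

end StageFiber

section SearchMachine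

def unary (k : ℕ) : List Bool := List.replicate k false ++ [true]

@[simp]
theorem length_unary (k : ℕ) : (unary k).length = k + 1 := by
  simp [unary]

theorem eq_of_unary_prefix {k j : ℕ} (h : unary k <+: unary j) : k = j := by
  obtain hkj | hjk := lt_or_ge k j
  · have := h.getElem (by simp : k < (unary k).length)
    simp [unary, hkj] at this
  · have := h.length_le
    simp only [length_unary] at this
    omega

theorem primrec_unary : Primrec unary := by
  have hrep : Primrec fun k => (List.range k).map fun _ => false :=
    Primrec.list_map Primrec.list_range (Primrec.const false).to₂
  refine (Primrec.list_append.comp hrep (Primrec.const [true])).of_eq fun k => ?_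
  simp [unary, List.map_const']

variable (P : ℕ → List Bool → ℕ → Prop) [∀ k s t, Decidable (P k s t)]

-- Only inputs of the form `unary k` can halt; this makes the domain prefix-free.
def searchMachine : List Bool →. List Bool := fun p =>
  Nat.rfindOpt fun n => (decode (α := List Bool × ℕ) n).bind fun x =>
    if p = unary (p.length - 1) ∧ P (p.length - 1) x.1 x.2 then some x.1 else none

variable {P}

theorem exists_of_mem_searchMachine {p s : List Bool} (h : s ∈ searchMachine P p) :
    ∃ k t, p = unary k ∧ P k s t := by
  obtain ⟨n, hn⟩ := Nat.rfindOpt_spec h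
  simp only [Option.mem_def, Option.bind_eq_some_iff] at hn
  obtain ⟨⟨s', t⟩, -, hx⟩ := hn
  split_ifs at hx with hp
  cases hx
  exact ⟨_, t, hp.1, hp.2⟩

theorem dom_searchMachine_unary {k t : ℕ} {s : List Bool} (h : P k s t) :
    (searchMachine P (unary k)).Dom :=
  Nat.rfindOpt_dom.2 ⟨encode (s, t), s, by simp [encodek, h]⟩

theorem pfMachine_searchMachine
    (hP : PrimrecPred fun x : ℕ × List Bool × ℕ => P x.1 x.2.1 x.2.2) :
    PFMachine (searchMachine P) := by
  refine ⟨Partrec.rfindOpt ?_, fun p hp q hq hpq => ?_⟩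
  · have hlen : Primrec fun y : (List Bool × ℕ) × List Bool × ℕ => y.1.1.length - 1 :=
      Primrec.nat_sub.comp (Primrec.list_length.comp (Primrec.fst.comp Primrec.fst))
        (Primrec.const 1)
    have hcond : PrimrecPred fun y : (List Bool × ℕ) × List Bool × ℕ =>
        y.1.1 = unary (y.1.1.length - 1) ∧ P (y.1.1.length - 1) y.2.1 y.2.2 :=
      (Primrec.eq.comp (Primrec.fst.comp Primrec.fst) (primrec_unary.comp hlen)).and
        (hP.comp (hlen.pair Primrec.snd))
    exact (Primrec.option_bind (Primrec.decode.comp Primrec.snd)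
      (Primrec.ite hcond (Primrec.option_some.comp (Primrec.fst.comp Primrec.snd))
        (Primrec.const none)).to₂).to_comp
  · obtain ⟨s, hs⟩ := Part.dom_iff_mem.1 hp
    obtain ⟨s', hs'⟩ := Part.dom_iff_mem.1 hq
    obtain ⟨k, -, rfl, -⟩ := exists_of_mem_searchMachine hs
    obtain ⟨j, -, rfl, -⟩ := exists_of_mem_searchMachine hs'
    rw [eq_of_unary_prefix hpq]

theorem OptimalPFM.exists_short_program_of_search {V : List Bool →. List Bool}
    (hV : OptimalPFM V)
    (hP : PrimrecPred fun x : ℕ × List Bool × ℕ => P x.1 x.2.1 x.2.2) :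
    ∃ d, ∀ k s t, P k s t → ∃ s' t' q, P k s' t' ∧ s' ∈ V q ∧ q.length ≤ k + 1 + d := by
  obtain ⟨d, hd⟩ := hV.2 _ (pfMachine_searchMachine hP)
  refine ⟨d, fun k s t h => ?_⟩
  obtain ⟨s', hs'⟩ := Part.dom_iff_mem.1 (dom_searchMachine_unary h)
  obtain ⟨q, hq, hqlen⟩ := hd _ _ hs'
  obtain ⟨j, t', hkj, ht'⟩ := exists_of_mem_searchMachine hs'
  obtain rfl : k = j := by simpa using congrArg List.length hkj
  exact ⟨s', t', q, ht', hq, by simpa using hqlen⟩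

end SearchMachine

theorem finite_setOf_exists_mem_length_lt (V : List Bool →. List Bool) (m : ℕ) :
    {s | ∃ p, s ∈ V p ∧ p.length < m}.Finite :=
  ((List.finite_length_lt Bool m).biUnion (t := fun p => {s | s ∈ V p}) fun _ _ =>
    Set.Subsingleton.finite fun _ hx _ hy => Part.mem_unique hx hy).subset
    fun _ ⟨_, hp, hlen⟩ => Set.mem_biUnion hlen hp

section StageWitness

variable (G : ℕ → List Bool → Option (List Bool)) (H : ℕ → List Bool × ℕ → Bool) (c : ℕ)

def StageWitness (k : ℕ) (s : List Bool) (t : ℕ) : Prop :=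
  k ≤ s.length ∧ H t (s, (stageFiber G t s).length + c) ∧
    ∀ p ∈ stageFiber G t s, 2 * k ≤ p.length

variable {G H}

theorem primrecPred_stageWitness (hG : Primrec₂ G) (hH : Primrec₂ H) :
    PrimrecPred fun x : ℕ × List Bool × ℕ => StageWitness G H c x.1 x.2.1 x.2.2 := by
  open Primrec in
  have hfib : Primrec fun x : ℕ × List Bool × ℕ => stageFiber G x.2.2 x.2.1 :=
    (primrec₂_stageFiber hG).comp (snd.comp snd) (fst.comp snd)
  have hlong : PrimrecRel fun (L : List (List Bool)) (k : ℕ) => ∀ p ∈ L, 2 * k ≤ p.length :=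
    PrimrecRel.forall_mem_list <| nat_le.comp₂
      (nat_mul.comp₂ (Primrec₂.const 2) Primrec₂.right) (list_length.comp₂ Primrec₂.left)
  refine (nat_le.comp fst (list_length.comp (fst.comp snd))).and
    ((Primrec.eq.comp (hH.comp (snd.comp snd) ((fst.comp snd).pair
      (nat_add.comp (list_length.comp hfib) (const c)))) (const true)).and
      (hlong.comp hfib fst))

theorem exists_stageWitness {V : List Bool →. List Bool} {f : List Bool → ℕ}
    (hG : IsStageApprox V G) (hH : ∀ s m, f s ≤ m → ∀ᶠ t in atTop, H t (s, m))
    {k : ℕ} {s : List Bool} (hfin : {p | s ∈ V p}.Finite)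
    (hs : f s ≤ {p | s ∈ V p}.ncard + c)
    (hk : k ≤ s.length) (hlong : ∀ p, s ∈ V p → 2 * k ≤ p.length) :
    ∃ t, StageWitness G H c k s t := by
  obtain ⟨t, hlen, hHt⟩ :=
    ((hG.eventually_length_stageFiber_eq_ncard hfin).and (hH _ _ hs)).exists
  exact ⟨t, hk, hlen ▸ hHt, fun p hp => hlong p (hG.mem_of_mem_stageFiber hp)⟩

end StageWitness

theorem OptimalPFM.finite_setOf_le_ncard_add {V : List Bool →. List Bool} (hV : OptimalPFM V)
    {f : List Bool → ℕ} (hf : RightComputable f) (hfin : ∀ s, {p | s ∈ V p}.Finite) {c : ℕ}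
    (hlt : {s | f s < {p | s ∈ V p}.ncard + c}.Finite) :
    {s | f s ≤ {p | s ∈ V p}.ncard + c}.Finite := by
  classical
  refine Set.not_infinite.1 fun hinf => ?_
  obtain ⟨G, hGp, hG⟩ := Partrec.exists_isStageApprox hV.1.1
  obtain ⟨H, hHp, hH_sound, hH_complete⟩ := REPred.exists_stage hf
  obtain ⟨d, hd⟩ := hV.exists_short_program_of_search (primrecPred_stageWitness c hGp hHp)
  obtain ⟨b, hb⟩ := (hlt.image List.length).bddAbove
  -- `k` exceeds the length of every string in `hlt`, and `k + 1 + d < 2 * k`.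
  set k := b + d + 2
  obtain ⟨s, ⟨⟨hs_le, -⟩, hs_len⟩, hs_long⟩ := (((hinf.sdiff hlt).sdiff
    (List.finite_length_lt Bool k)).sdiff (finite_setOf_exists_mem_length_lt V (2 * k))).nonempty
  obtain ⟨t, ht⟩ := exists_stageWitness c hG (fun s m h => hH_complete (s, m) h) (hfin s) hs_le
    (not_lt.1 hs_len) fun p hp => not_lt.1 fun h => hs_long ⟨p, hp, h⟩
  obtain ⟨s', t', q, ⟨hk', hH', hlong'⟩, hq, hqlen⟩ := hd k s t ht
  have hs'_ge : {p | s' ∈ V p}.ncard + c ≤ f s' :=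
    not_lt.1 fun h => by have := hb ⟨s', h, rfl⟩; omega
  have hcount : f s' ≤ (stageFiber G t' s').length + c := hH_sound _ _ hH'
  have := hlong' q (hG.mem_stageFiber_of_ncard_le (hfin s') (by omega) hq)
  omega

/-- If `V` is optimal and `#V⁻¹(s) ≤ f(s)` for all `s` with `f` right-computable, then
`f(s) − #V⁻¹(s) → ∞` as `s → ∞`: for every `M`, `f(s) − #V⁻¹(s) ≥ M` (i.e. not
`f(s) < #V⁻¹(s) + M`) for all but finitely many strings `s`. -/
theorem card_fiber_diff_tendsto_atTop (V : List Bool →. List Bool)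
    (hV : OptimalPFM V) (f : List Bool → ℕ) (hf : RightComputable f)
    (hfin : ∀ s, {p : List Bool | s ∈ V p}.Finite)
    (hle : ∀ s, {p : List Bool | s ∈ V p}.ncard ≤ f s) :
    ∀ M : ℕ, {s : List Bool | f s < {p : List Bool | s ∈ V p}.ncard + M}.Finite := by
  intro M
  induction M with
  | zero => exact Set.finite_empty.subset fun s hs => (hle s).not_gt hs
  | succ c ih =>
    simpa only [← add_assoc, Nat.lt_add_one_iff] using hV.finite_setOf_le_ncard_add hf hfin ih
end

section
/- Let U be an optimal prefix-free machine and let b : {0,1}* × {0,1}* → {0,1}* be a fixed bijective total recursive pairing function, with H = H_U and joint complexity H(m,s) = H_U(b(m,s)). Then H(s) + n − H(H(s)+n, s) diverges to ∞ as n → ∞ uniformly in s; that is, for every M ∈ ℕ there exists n₀ ∈ ℕ such that for every n ≥ n₀ and every finite binary string s, H(s) + n − H(H(s)+n, s) ≥ M. Here the first argument H(s)+n ∈ ℕ is identified with a finite binary string via the bijection φ(s) = (the dyadic integer 1s) − 1. -/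
open scoped ENNReal

/-! Prefixing a shortest program `q` for `s` with a self-delimiting description of `n`, of length
`2 log₂ n + O(1)`, gives a program for `b(H(s) + n, s)` on a prefix-free machine that reads `n`,
recovers `H(s) = |q|`, runs `U` on `q` and pairs. Optimality of `U` turns this into
`H(H(s) + n, s) ≤ H(s) + 2 log₂ n + O(1)` with a constant independent of `s`, and
`n - 2 log₂ n → ∞`. -/

theorem Nat.bits_eq_bodd_cons {n : ℕ} (hn : n ≠ 0) : n.bits = n.bodd :: n.div2.bits := by
  induction n using Nat.binaryRec' with
  | zero => contradiction
  | bit b m h _ => rw [Nat.bits_append_bit m b h, Nat.bodd_bit, Nat.div2_bit]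

theorem Primrec.nat_bits : Primrec Nat.bits :=
  Primrec.nat_omega_rec' Nat.bits (l := fun n => if n = 0 then [] else [n.div2])
    (g := fun n L => if n = 0 then some [] else L.head?.map (n.bodd :: ·))
    Primrec.id
    (Primrec.ite (Primrec.eq.comp Primrec.id (Primrec.const 0)) (Primrec.const [])
      (Primrec.list_cons.comp Primrec.nat_div2 (Primrec.const [])))
    (Primrec.ite (Primrec.eq.comp Primrec.fst (Primrec.const 0)) (Primrec.const (some []))
      (Primrec.option_map (Primrec.list_head?.comp Primrec.snd)
        (Primrec.list_cons.comp (Primrec.nat_bodd.comp (Primrec.fst.comp Primrec.fst))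
          Primrec.snd).to₂))
    (fun n m hm => by
      split_ifs at hm with hn
      · simp at hm
      · rw [List.mem_singleton.1 hm, Nat.div2_val]
        exact Nat.div_lt_self (Nat.pos_of_ne_zero hn) one_lt_two)
    (fun n => by
      by_cases hn : n = 0
      · simp [hn]
      · simp [hn, Nat.bits_eq_bodd_cons hn])

theorem primrec_strOfNat : Primrec strOfNat :=
  Primrec.list_reverse.comp <|
    (Primrec.list_take.comp (Primrec.nat_sub.comp Primrec.list_length (Primrec.const 1))
      Primrec.id).comp (Primrec.nat_bits.comp Primrec.succ) |>.of_eq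
    fun n => by simp [List.dropLast_eq_take]

def ofBits : List Bool → ℕ := List.foldr Nat.bit 0

theorem ofBits_bits (n : ℕ) : ofBits n.bits = n := by
  induction n using Nat.binaryRec' with
  | zero => rfl
  | bit b n h ih => rw [Nat.bits_append_bit n b h, ofBits, List.foldr_cons, ← ofBits, ih]

theorem Primrec.nat_bit : Primrec₂ Nat.bit :=
  (Primrec.cond Primrec.fst (Primrec.succ.comp (Primrec.nat_mul.comp (Primrec.const 2) Primrec.snd))
    (Primrec.nat_mul.comp (Primrec.const 2) Primrec.snd)).of_eq fun ⟨b, n⟩ => by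
      cases b <;> simp [Nat.bit_val]

theorem primrec_ofBits : Primrec ofBits :=
  Primrec.list_foldr Primrec.id (Primrec.const 0)
    (Primrec.nat_bit.comp (Primrec.fst.comp Primrec.snd) (Primrec.snd.comp Primrec.snd)).to₂

def selfDelimit (m : List Bool) : List Bool := List.replicate m.length true ++ false :: m

-- The guard `2k + 1 ≤ |p|` is what makes the domain of `paramMachine` prefix-free.
def splitSelfDelimited (p : List Bool) : Option (List Bool × List Bool) :=
  let k := p.findIdx (!·)
  if 2 * k + 1 ≤ p.length then some ((p.drop (k + 1)).take k, p.drop (2 * k + 1)) else none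

theorem length_selfDelimit (m : List Bool) : (selfDelimit m).length = 2 * m.length + 1 := by
  simp [selfDelimit]; omega

theorem findIdx_not_replicate_true_append (n : ℕ) (l : List Bool) :
    (List.replicate n true ++ false :: l).findIdx (!·) = n := by
  induction n <;> simp_all [List.replicate_succ, List.findIdx_cons]

theorem splitSelfDelimited_selfDelimit_append (m q : List Bool) :
    splitSelfDelimited (selfDelimit m ++ q) = some (m, q) := by
  have hp : selfDelimit m ++ q = List.replicate m.length true ++ false :: (m ++ q) := by
    simp [selfDelimit]
  have hk := findIdx_not_replicate_true_append m.length (m ++ q)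
  dsimp only [splitSelfDelimited]
  rw [hp, hk, if_pos (by simp; omega)]
  simp [List.drop_append, show 2 * m.length + 1 - m.length = m.length + 1 by omega]
  omega

theorem splitSelfDelimited_append {p m q : List Bool} (h : splitSelfDelimited p = some (m, q))
    (r : List Bool) : splitSelfDelimited (p ++ r) = some (m, q ++ r) := by
  dsimp only [splitSelfDelimited] at h ⊢
  split_ifs at h with hp
  obtain ⟨rfl, rfl⟩ := Prod.mk.inj (Option.some_inj.1 h)
  have hk : (p ++ r).findIdx (!·) = p.findIdx (!·) := by
    rw [List.findIdx_append, if_pos (by omega)]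
  simp only [hk, List.length_append, List.drop_append_of_le_length hp]
  rw [if_pos (by omega), List.drop_append_of_le_length (by omega),
    List.take_append_of_le_length (by simp; omega)]

theorem primrec_splitSelfDelimited : Primrec splitSelfDelimited := by
  have hk : Primrec fun p : List Bool => p.findIdx (!·) :=
    Primrec.list_findIdx Primrec.id (Primrec.not.comp Primrec.snd).to₂
  have h2k : Primrec fun p : List Bool => 2 * p.findIdx (!·) + 1 :=
    Primrec.succ.comp (Primrec.nat_mul.comp (Primrec.const 2) hk)
  exact Primrec.ite (Primrec.nat_le.comp h2k Primrec.list_length)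
    (Primrec.option_some.comp <| Primrec.pair
      (Primrec.list_take.comp hk (Primrec.list_drop.comp (Primrec.succ.comp hk) Primrec.id))
      (Primrec.list_drop.comp h2k Primrec.id))
    (Primrec.const none)

def paramMachine (U : List Bool →. List Bool) (g : List Bool × List Bool → List Bool → List Bool) :
    List Bool →. List Bool :=
  fun p => (Part.ofOption (splitSelfDelimited p)).bind fun mq => (U mq.2).map (g mq)

section paramMachine

variable {U : List Bool →. List Bool} {g : List Bool × List Bool → List Bool → List Bool}

theorem mem_paramMachine_selfDelimit_append {m q s : List Bool} (h : s ∈ U q) :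
    g (m, q) s ∈ paramMachine U g (selfDelimit m ++ q) := by
  simp only [paramMachine, splitSelfDelimited_selfDelimit_append, Part.mem_bind_iff]
  exact ⟨(m, q), Part.mem_some _, Part.mem_map _ h⟩

theorem paramMachine_dom_iff {p : List Bool} :
    (paramMachine U g p).Dom ↔ ∃ m q, splitSelfDelimited p = some (m, q) ∧ (U q).Dom := by
  rcases h : splitSelfDelimited p with _ | ⟨m, q⟩ <;> simp [paramMachine, h]

theorem PrefixFreeSet.dom_paramMachine (hU : PrefixFreeSet U.Dom) :
    PrefixFreeSet (paramMachine U g).Dom := by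
  rintro p hp _ hp' ⟨r, rfl⟩
  obtain ⟨m, q, hsplit, hq⟩ := paramMachine_dom_iff.1 hp
  obtain ⟨_, _, hsplit', hq'⟩ := paramMachine_dom_iff.1 hp'
  rw [splitSelfDelimited_append hsplit r, Option.some_inj] at hsplit'
  obtain ⟨-, rfl⟩ := Prod.mk.inj hsplit'
  have hr : q = q ++ r := hU q hq (q ++ r) hq' (List.prefix_append q r)
  rw [List.append_right_eq_self.1 hr.symm, List.append_nil]

theorem PFMachine.paramMachine (hU : PFMachine U) (hg : Computable₂ g) :
    PFMachine (paramMachine U g) :=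
  ⟨Partrec.bind (Computable.ofOption primrec_splitSelfDelimited.to_comp)
      (Partrec.map (hU.1.comp (Computable.snd.comp Computable.snd))
        (hg.comp (Computable.snd.comp Computable.fst) Computable.snd)),
    hU.2.dom_paramMachine⟩

end paramMachine

theorem toNat_Hm_le {U : List Bool →. List Bool} {p s : List Bool} (h : s ∈ U p) :
    (Hm U s).toNat ≤ p.length :=
  ENat.toNat_le_of_le_natCast (sInf_le ⟨p, h, rfl⟩)

theorem exists_toNat_Hm_eq {U : List Bool →. List Bool} {s : List Bool} (h : ∃ p, s ∈ U p) :
    ∃ q, s ∈ U q ∧ (Hm U s).toNat = q.length := by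
  have hne : ((fun p : List Bool => (p.length : ℕ∞)) '' {p | s ∈ U p}).Nonempty :=
    Set.image_nonempty.2 h
  obtain ⟨q, hq, hHq⟩ := csInf_mem hne
  exact ⟨q, hq, by rw [Hm, ← hHq, ENat.toNat_natCast]⟩

namespace OptimalPFM

variable {U : List Bool →. List Bool}

theorem exists_mem (hU : OptimalPFM U) (s : List Bool) : ∃ p, s ∈ U p := by
  let C : List Bool →. List Bool := fun p => Part.ofOption (if p = [] then some s else none)
  have hdom : ∀ p ∈ C.Dom, p = [] := by
    intro p hp
    by_contra hne
    simp [C, hne] at hp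
  have hC : PFMachine C :=
    ⟨Computable.ofOption (Primrec.ite (Primrec.eq.comp Primrec.id (Primrec.const []))
        (Primrec.const (some s)) (Primrec.const none)).to_comp,
      fun p hp q hq _ => (hdom p hp).trans (hdom q hq).symm⟩
  obtain ⟨d, hd⟩ := hU.2 C hC
  obtain ⟨q, hq, -⟩ := hd [] s (by simp [C])
  exact ⟨q, hq⟩

theorem exists_toNat_Hm_le (hU : OptimalPFM U) {C : List Bool →. List Bool} (hC : PFMachine C) :
    ∃ d, ∀ p s, s ∈ C p → (Hm U s).toNat ≤ p.length + d := by
  obtain ⟨d, hd⟩ := hU.2 C hC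
  refine ⟨d, fun p s hs => ?_⟩
  obtain ⟨q, hq, hlen⟩ := hd p s hs
  exact (toNat_Hm_le hq).trans hlen

end OptimalPFM

theorem Nat.exists_forall_two_mul_size_add_le (c : ℕ) :
    ∃ n₀, ∀ n, n₀ ≤ n → 2 * n.size + c ≤ n := by
  refine ⟨2 ^ (c + 3), fun n hn => ?_⟩
  have hsize : c + 3 < n.size := Nat.lt_size.2 hn
  have hsize_le : 2 ^ (n.size - 1) ≤ n := Nat.lt_size.1 (by omega)
  have hpow : n.size - 3 < 2 ^ (n.size - 3) := Nat.lt_two_pow_self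
  have hsplit : 2 ^ (n.size - 1) = 2 ^ (n.size - 3) * 4 := by
    rw [show n.size - 1 = n.size - 3 + 2 by omega, pow_add]; rfl
  omega

theorem joint_H_diverges_uniformly_general (U : List Bool →. List Bool) (hU : OptimalPFM U)
    (b : List Bool × List Bool → List Bool)
    (hbc : Computable b) :
    ∀ M : ℕ, ∃ n₀ : ℕ, ∀ n : ℕ, n₀ ≤ n → ∀ s : List Bool,
      (Hm U (b (strOfNat ((Hm U s).toNat + n), s))).toNat + M ≤ (Hm U s).toNat + n := by
  intro M
  let g : List Bool × List Bool → List Bool → List Bool := fun mq s =>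
    b (strOfNat (mq.2.length + ofBits mq.1), s)
  have hg : Computable₂ g :=
    hbc.comp (Computable.pair (primrec_strOfNat.comp (Primrec.nat_add.comp
      (Primrec.list_length.comp (Primrec.snd.comp Primrec.fst))
      (primrec_ofBits.comp (Primrec.fst.comp Primrec.fst)))).to_comp Computable.snd)
  obtain ⟨d, hd⟩ := hU.exists_toNat_Hm_le (hU.1.paramMachine hg)
  obtain ⟨n₀, hn₀⟩ := Nat.exists_forall_two_mul_size_add_le (d + M + 1)
  refine ⟨n₀, fun n hn s => ?_⟩
  obtain ⟨q, hq, hHq⟩ := exists_toNat_Hm_eq (hU.exists_mem s)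
  have hshift := hd _ _ (mem_paramMachine_selfDelimit_append (g := g) (m := n.bits) hq)
  rw [List.length_append, length_selfDelimit, Nat.size_eq_bits_len] at hshift
  simp only [g, ofBits_bits] at hshift
  rw [hHq]
  have := hn₀ n hn
  omega

/-- `H(s) + n − H(H(s)+n, s)` diverges to `∞` as `n → ∞`, uniformly in `s`:
for every `M` there is `n₀` such that for all `n ≥ n₀` and all `s`,
`H(H(s)+n, s) + M ≤ H(s) + n`. Here `H = H_U` and `H(m,s) = H_U(b(m,s))`. -/
theorem joint_H_diverges_uniformly (U : List Bool →. List Bool) (hU : OptimalPFM U)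
    (b : List Bool × List Bool → List Bool) (hb : Function.Bijective b)
    (hbc : Computable b) :
    ∀ M : ℕ, ∃ n₀ : ℕ, ∀ n : ℕ, n₀ ≤ n → ∀ s : List Bool,
      (Hm U (b (strOfNat ((Hm U s).toNat + n), s))).toNat + M ≤ (Hm U s).toNat + n :=
  joint_H_diverges_uniformly_general U hU b hbc
end

section
/- Let U be an optimal prefix-free machine and let b : {0,1}* × {0,1}* → {0,1}* be a fixed bijective total recursive pairing function, with joint complexity H(n,s) = H_U(b(n,s)). Let C be a prefix-free machine and suppose there exists d ∈ ℕ such that 2^{n − H(n,s) − d} ≤ #S_C(n,s) for all n ∈ ℕ and all finite binary strings s with n − H(n,s) ≥ d, where S_C(n,s) = {p ∈ {0,1}* : |p| ≤ n and C(p) = s} and n is identified with a finite binary string via the bijection φ(s) = (the dyadic integer 1s) − 1. Then C is an optimal prefix-free machine. -/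
open scoped ENNReal

/-!
Let `D` be a prefix-free machine; `U` simulates it with overhead `d_D`. The machine that on
input `0^k 1 q` runs `U` on `q` and outputs `b(2k + |q|, U(q))` is prefix-free, so `U` simulates
it with some overhead `e`: whenever `U(q) = s`, `H(2k + |q|, s) ≤ k + 1 + |q| + e`. For
`k = e + d + 1` this is at most `2k + |q| - d`, so the hypothesis at `n = 2k + |q|` makes
`S_C(n, s)` nonempty, i.e. `C` has a program for `s` of length at most `|q| + 2k`. Applied to
`q` with `U(q) = D(p)` and `|q| ≤ |p| + d_D`, this simulates `D` by `C` with overhead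
`d_D + 2k`.
-/

def succBits : List Bool → List Bool
  | [] => [true]
  | false :: l => true :: l
  | true :: l => false :: succBits l

theorem Nat.bits_succ (k : ℕ) : (k + 1).bits = succBits k.bits := by
  induction k using Nat.strong_induction_on with
  | _ k ih =>
    obtain ⟨m, rfl | rfl⟩ := Nat.even_or_odd' k
    · rcases eq_or_ne m 0 with rfl | hm
      · simp [succBits, Nat.one_bits]
      · rw [Nat.bit1_bits, Nat.bit0_bits m hm, succBits]
    · rw [show 2 * m + 1 + 1 = 2 * (m + 1) by ring, Nat.bit0_bits _ m.succ_ne_zero,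
        Nat.bit1_bits, succBits, ih m (by omega)]

theorem Nat.bits_eq_succBits_iterate (n : ℕ) : n.bits = succBits^[n] [] := by
  induction n with
  | zero => rfl
  | succ n ih => rw [Nat.bits_succ, ih, Function.iterate_succ_apply' succBits n]

theorem primrec_succBits : Primrec succBits := by
  refine (Primrec.list_rec Primrec.id (Primrec.const [true])
    (h := fun _ (x : Bool × List Bool × List Bool) => cond x.1 (false :: x.2.2) (true :: x.2.1))
    ?_).of_eq fun l => ?_
  · exact (Primrec.cond (Primrec.fst.comp Primrec.snd)
      (Primrec.list_cons.comp (Primrec.const false)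
        (Primrec.snd.comp (Primrec.snd.comp Primrec.snd)))
      (Primrec.list_cons.comp (Primrec.const true)
        (Primrec.fst.comp (Primrec.snd.comp Primrec.snd)))).to₂
  · induction l with
    | nil => rfl
    | cons b l ih => cases b <;> simp_all [succBits]

def unaryPrefix (k : ℕ) (q : List Bool) : List Bool := List.replicate k false ++ true :: q

def decodeUnaryPrefix : List Bool → Option (ℕ × List Bool)
  | [] => none
  | true :: q => some (0, q)
  | false :: r => (decodeUnaryPrefix r).map fun kq => (kq.1 + 1, kq.2)

@[simp]
theorem length_unaryPrefix (k : ℕ) (q : List Bool) :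
    (unaryPrefix k q).length = k + 1 + q.length := by
  simp [unaryPrefix]
  omega

theorem decodeUnaryPrefix_eq_some_iff {r q : List Bool} {k : ℕ} :
    decodeUnaryPrefix r = some (k, q) ↔ r = unaryPrefix k q := by
  induction r generalizing k with
  | nil => simp [decodeUnaryPrefix, unaryPrefix]
  | cons b r ih =>
    cases b <;> cases k <;> simp [decodeUnaryPrefix, unaryPrefix, List.replicate_succ, eq_comm]
    exact ih

theorem unaryPrefix_prefix_unaryPrefix {k k' : ℕ} {q q' : List Bool}
    (h : unaryPrefix k q <+: unaryPrefix k' q') : k = k' ∧ q <+: q' := by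
  induction k generalizing k' with
  | zero => cases k' <;> simp_all [unaryPrefix, List.replicate_succ]
  | succ k ih =>
    cases k' <;> simp_all [unaryPrefix, List.replicate_succ]
    exact ih h

theorem primrec_decodeUnaryPrefix : Primrec decodeUnaryPrefix := by
  refine (Primrec.list_rec Primrec.id (Primrec.const none)
    (h := fun _ (x : Bool × List Bool × Option (ℕ × List Bool)) =>
      cond x.1 (some (0, x.2.1)) (x.2.2.map fun kq => (kq.1 + 1, kq.2))) ?_).of_eq fun r => ?_
  · exact (Primrec.cond (Primrec.fst.comp Primrec.snd)
      (Primrec.option_some.comp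
        ((Primrec.const 0).pair (Primrec.fst.comp (Primrec.snd.comp Primrec.snd))))
      (Primrec.option_map (Primrec.snd.comp (Primrec.snd.comp Primrec.snd))
        ((Primrec.succ.comp (Primrec.fst.comp Primrec.snd)).pair
          (Primrec.snd.comp Primrec.snd)).to₂)).to₂
  · induction r with
    | nil => rfl
    | cons b l ih => cases b <;> simp_all [decodeUnaryPrefix]

def unaryPrefixMachine (U : List Bool →. List Bool)
    (f : ℕ × List Bool → List Bool → List Bool) : List Bool →. List Bool :=
  fun r => (Part.ofOption (decodeUnaryPrefix r)).bind fun kq => (U kq.2).map (f kq)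

section unaryPrefixMachine

variable {U : List Bool →. List Bool} {f : ℕ × List Bool → List Bool → List Bool}

theorem mem_unaryPrefixMachine {k : ℕ} {q s : List Bool} (h : s ∈ U q) :
    f (k, q) s ∈ unaryPrefixMachine U f (unaryPrefix k q) :=
  Part.mem_bind_iff.2 ⟨(k, q), Part.mem_ofOption.2 (decodeUnaryPrefix_eq_some_iff.2 rfl),
    Part.mem_map _ h⟩

theorem exists_of_mem_dom_unaryPrefixMachine {r : List Bool}
    (h : r ∈ (unaryPrefixMachine U f).Dom) : ∃ k q, r = unaryPrefix k q ∧ q ∈ U.Dom := by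
  obtain ⟨y, hy⟩ := (PFun.mem_dom _ _).1 h
  obtain ⟨⟨k, q⟩, hkq, hy⟩ := Part.mem_bind_iff.1 hy
  obtain ⟨s, hs, -⟩ := Part.mem_map_iff _ |>.1 hy
  exact ⟨k, q, decodeUnaryPrefix_eq_some_iff.1 (Part.mem_ofOption.1 hkq),
    (PFun.mem_dom _ _).2 ⟨s, hs⟩⟩

theorem Partrec.unaryPrefixMachine (hU : Partrec U) (hf : Computable₂ f) :
    Partrec (unaryPrefixMachine U f) :=
  (Computable.ofOption primrec_decodeUnaryPrefix.to_comp).bind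
    ((hU.comp (Computable.snd.comp Computable.snd)).map
      (hf.comp (Computable.snd.comp Computable.fst) Computable.snd).to₂).to₂

theorem PFMachine.unaryPrefixMachine (hU : PFMachine U) (hf : Computable₂ f) :
    PFMachine (unaryPrefixMachine U f) := by
  refine ⟨hU.1.unaryPrefixMachine hf, ?_⟩
  intro r hr r' hr' hpre
  obtain ⟨k, q, rfl, hq⟩ := exists_of_mem_dom_unaryPrefixMachine hr
  obtain ⟨k', q', rfl, hq'⟩ := exists_of_mem_dom_unaryPrefixMachine hr'
  obtain ⟨rfl, hqq'⟩ := unaryPrefix_prefix_unaryPrefix hpre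
  rw [hU.2 q hq q' hq' hqq']

end unaryPrefixMachine

theorem Hm_toNat_le {C : List Bool →. List Bool} {p s : List Bool} (h : s ∈ C p) :
    (Hm C s).toNat ≤ p.length :=
  ENat.toNat_le_of_le_natCast (sInf_le ⟨p, h, rfl⟩)

theorem Set.nonempty_of_two_zpow_le_ncard {α : Type*} {S : Set α} {z : ℤ}
    (h : (2 : ℝ) ^ z ≤ S.ncard) : S.Nonempty :=
  Set.nonempty_of_ncard_ne_zero (by exact_mod_cast ((zpow_pos two_pos z).trans_le h).ne')

theorem optimal_of_card_S_ge_general (U : List Bool →. List Bool) (hU : OptimalPFM U)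
    (b : List Bool × List Bool → List Bool)
    (hbc : Computable b)
    (C : List Bool →. List Bool) (hC : PFMachine C)
    (d : ℕ)
    (hd : ∀ (n : ℕ) (s : List Bool), (Hm U (b (strOfNat n, s))).toNat + d ≤ n →
      (2 : ℝ) ^ ((n : ℤ) - ((Hm U (b (strOfNat n, s))).toNat : ℤ) - d) ≤
        ({p : List Bool | p.length ≤ n ∧ s ∈ C p}.ncard : ℝ)) :
    OptimalPFM C := by
  refine ⟨hC, fun D hD => ?_⟩
  obtain ⟨dD, hdD⟩ := hU.2 D hD
  have hf : Computable₂ fun (kq : ℕ × List Bool) s =>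
      b (strOfNat (2 * kq.1 + kq.2.length), s) := by
    have hn : Primrec fun x : (ℕ × List Bool) × List Bool => 2 * x.1.1 + x.1.2.length :=
      Primrec.nat_add.comp (Primrec.nat_mul.comp (Primrec.const 2) (Primrec.fst.comp Primrec.fst))
        (Primrec.list_length.comp (Primrec.snd.comp Primrec.fst))
    exact (hbc.comp ((primrec_strOfNat.comp hn).to_comp.pair Computable.snd)).to₂
  obtain ⟨e, he⟩ := hU.2 _ (hU.1.unaryPrefixMachine hf)
  refine ⟨dD + 2 * (e + d + 1), fun p s hs => ?_⟩
  obtain ⟨q, hq, hqp⟩ := hdD p s hs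
  set n := 2 * (e + d + 1) + q.length
  obtain ⟨r, hr, hrq⟩ := he _ _ (mem_unaryPrefixMachine (k := e + d + 1) hq)
  have hHm : (Hm U (b (strOfNat n, s))).toNat + d ≤ n := by
    have := Hm_toNat_le (C := U) (s := b (strOfNat n, s)) hr
    rw [length_unaryPrefix] at hrq
    omega
  obtain ⟨p', hp'n, hp'⟩ := Set.nonempty_of_two_zpow_le_ncard (hd n s hHm)
  exact ⟨p', hp', by omega⟩

/-- If a prefix-free machine `C` satisfies `2^(n − H(n,s) − d) ≤ #S_C(n,s)` whenever
`n − H(n,s) ≥ d` (where `H(n,s) = H_U(b(n,s))` for a fixed optimal `U` and recursive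
pairing bijection `b`), then `C` is optimal. -/
theorem optimal_of_card_S_ge (U : List Bool →. List Bool) (hU : OptimalPFM U)
    (b : List Bool × List Bool → List Bool) (hb : Function.Bijective b)
    (hbc : Computable b)
    (C : List Bool →. List Bool) (hC : PFMachine C)
    (d : ℕ)
    (hd : ∀ (n : ℕ) (s : List Bool), (Hm U (b (strOfNat n, s))).toNat + d ≤ n →
      (2 : ℝ) ^ ((n : ℤ) - ((Hm U (b (strOfNat n, s))).toNat : ℤ) - d) ≤
        ({p : List Bool | p.length ≤ n ∧ s ∈ C p}.ncard : ℝ)) :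
    OptimalPFM C :=
  optimal_of_card_S_ge_general U hU b hbc C hC d hd
end
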